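/- arXiv:2205.08493 — 10 statements merged into one kernel-verified Lean document; each statement's English description precedes it below -/
import Mathlib

section
/- Let x ∈ ℕ^n be a multiset of items (each item i has weight w_i ≥ 1 and profit p_i ≥ 0, with w_i ≤ w_max and p_i ≤ p_max), with ‖x‖₁ ≤ 2^i for some i ≥ 1, and let Δ = p_max + w_max. Then x can be partitioned into x₁, x₂ ∈ ℕ^n with x = x₁ + x₂, ‖x₁‖₁, ‖x₂‖₁ ≤ 2^{i-1}, |w(x₁) − w(x)/2| ≤ 2Δ, |w(x₂) − w(x)/2| ≤ 2Δ, |p(x₁) − p(x)/2| ≤ 2Δ, and |p(x₂) − p(x)/2| ≤ 2Δ. -/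
private lemma abs_add_or_sub (d e c : ℤ) (hd : |d| ≤ c) (he : |e| ≤ c) :
    |d + e| ≤ c ∨ |d - e| ≤ c := by
  simp only [abs_le] at *
  omega

private lemma sum_map_eq_sum_count {n : ℕ} (M : List (Fin n)) (f : Fin n → ℕ) :
    (M.map f).sum = ∑ k, M.count k * f k := by
  induction M with
  | nil => simp
  | cons a M ih =>
    simp only [List.map_cons, List.sum_cons, ih, List.count_cons, beq_iff_eq,
      Nat.add_mul, ite_mul, one_mul, zero_mul]
    rw [Finset.sum_add_distrib]
    simp only [Finset.sum_ite_eq, Finset.mem_univ, if_true]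
    omega

private lemma length_eq_sum_count {n : ℕ} (M : List (Fin n)) :
    M.length = ∑ k, M.count k := by
  have := sum_map_eq_sum_count M (fun _ => 1)
  simpa using this

private lemma split_aux {n : ℕ} (w p : Fin n → ℕ) (pmax : ℕ) (hp : ∀ k, p k ≤ pmax) :
    ∀ m (L : List (Fin n)), L.length ≤ m →
      L.Pairwise (fun a b => w b ≤ w a) →
      ∃ A B : List (Fin n),
        (A ++ B).Perm L ∧
        A.length ≤ (L.length + 1) / 2 ∧ B.length ≤ (L.length + 1) / 2 ∧
        |((A.map w).sum : ℤ) - ((B.map w).sum : ℤ)| ≤ ((L.head?.elim 0 w : ℕ) : ℤ) ∧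
        |((A.map p).sum : ℤ) - ((B.map p).sum : ℤ)| ≤ (pmax : ℤ) := by
  intro m
  induction m with
  | zero =>
    intro L hL _
    have : L = [] := List.length_eq_zero_iff.mp (Nat.le_zero.mp hL)
    subst this
    exact ⟨[], [], by simp, by simp, by simp, by simp, by simp⟩
  | succ m ih =>
    intro L hL hs
    match L with
    | [] => exact ⟨[], [], by simp, by simp, by simp, by simp, by simp⟩
    | [a] =>
      refine ⟨[a], [], by simp, by simp, by simp, ?_, ?_⟩
      · simp only [List.map_cons, List.map_nil, List.sum_cons, List.sum_nil,
          List.head?_cons, Option.elim]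
        rw [abs_le]; constructor <;> push_cast <;> omega
      · simp only [List.map_cons, List.map_nil, List.sum_cons, List.sum_nil]
        have := hp a
        rw [abs_le]; constructor <;> push_cast <;> omega
    | a :: b :: R =>
      have hlen : R.length ≤ m := by simp at hL; omega
      have hsR : R.Pairwise (fun a b => w b ≤ w a) :=
        ((List.pairwise_cons.mp (List.pairwise_cons.mp hs).2).2)
      obtain ⟨A, B, hperm, hlA, hlB, hdw, hdp⟩ := ih R hlen hsR
      have hba : w b ≤ w a := (List.pairwise_cons.mp hs).1 b (by simp)
      have hheadR : (R.head?.elim 0 w : ℕ) ≤ w b := by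
        cases R with
        | nil => simp
        | cons c R' =>
          simpa using (List.pairwise_cons.mp (List.pairwise_cons.mp hs).2).1 c (by simp)
      have hdw' : |((A.map w).sum : ℤ) - ((B.map w).sum : ℤ)| ≤ (w b : ℤ) :=
        le_trans hdw (by exact_mod_cast hheadR)
      have hwnew : ∀ s : ℤ, s = 1 ∨ s = -1 →
          |(((A.map w).sum : ℤ) - ((B.map w).sum : ℤ)) + s * ((w a : ℤ) - (w b : ℤ))|
            ≤ (w a : ℤ) := by
        intro s hs1
        rw [abs_le] at hdw' ⊢
        have h1 : (w b : ℤ) ≤ (w a : ℤ) := by exact_mod_cast hba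
        rcases hs1 with h | h <;> subst h <;> constructor <;> nlinarith
      have hea : |((p a : ℤ)) - (p b : ℤ)| ≤ (pmax : ℤ) := by
        have h1 := hp a; have h2 := hp b
        rw [abs_le]
        omega
      have hperm1 : (a :: A ++ b :: B).Perm (a :: b :: R) := by
        refine List.Perm.cons a ?_
        exact List.perm_middle.trans (hperm.cons b)
      have hperm2 : (b :: A ++ a :: B).Perm (a :: b :: R) := by
        refine List.Perm.trans (List.Perm.cons b List.perm_middle) ?_
        exact (List.Perm.swap a b (A ++ B)).trans ((hperm.cons b).cons a)
      have hlen1 : (a :: A).length ≤ ((a :: b :: R).length + 1) / 2 ∧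
                   (b :: B).length ≤ ((a :: b :: R).length + 1) / 2 := by
        simp only [List.length_cons] at *
        omega
      rcases abs_add_or_sub _ _ _ hdp hea with h | h
      · refine ⟨a :: A, b :: B, hperm1, hlen1.1, ?_, ?_, ?_⟩
        · simpa [List.length_cons] using hlen1.2
        · have := hwnew 1 (Or.inl rfl)
          simp only [List.map_cons, List.sum_cons, List.head?_cons, Option.elim]
          rw [Nat.cast_add, Nat.cast_add]
          rw [show ((w a : ℤ) + ((A.map w).sum : ℤ)) - ((w b : ℤ) + ((B.map w).sum : ℤ))
              = (((A.map w).sum : ℤ) - ((B.map w).sum : ℤ)) + 1 * ((w a : ℤ) - (w b : ℤ))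
              by push_cast; ring]
          exact this
        · simp only [List.map_cons, List.sum_cons]
          rw [Nat.cast_add, Nat.cast_add]
          rw [show ((p a : ℤ) + ((A.map p).sum : ℤ)) - ((p b : ℤ) + ((B.map p).sum : ℤ))
              = (((A.map p).sum : ℤ) - ((B.map p).sum : ℤ)) + ((p a : ℤ) - (p b : ℤ))
              by push_cast; ring]
          exact h
      · refine ⟨b :: A, a :: B, hperm2, ?_, ?_, ?_, ?_⟩
        · simpa [List.length_cons] using hlen1.1
        · simpa [List.length_cons] using hlen1.2
        · have := hwnew (-1) (Or.inr rfl)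
          simp only [List.map_cons, List.sum_cons, List.head?_cons, Option.elim]
          rw [Nat.cast_add, Nat.cast_add]
          rw [show ((w b : ℤ) + ((A.map w).sum : ℤ)) - ((w a : ℤ) + ((B.map w).sum : ℤ))
              = (((A.map w).sum : ℤ) - ((B.map w).sum : ℤ)) + (-1) * ((w a : ℤ) - (w b : ℤ))
              by push_cast; ring]
          exact this
        · simp only [List.map_cons, List.sum_cons]
          rw [Nat.cast_add, Nat.cast_add]
          rw [show ((p b : ℤ) + ((A.map p).sum : ℤ)) - ((p a : ℤ) + ((B.map p).sum : ℤ))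
              = (((A.map p).sum : ℤ) - ((B.map p).sum : ℤ)) - ((p a : ℤ) - (p b : ℤ))
              by push_cast; ring]
          exact h

private lemma half_bound (a b t c : ℝ) (ht : a + b = t) (h : |a - b| ≤ c) :
    |a - t / 2| ≤ c := by
  have he : a - t / 2 = (a - b) / 2 := by rw [← ht]; ring
  have h0 : 0 ≤ c := le_trans (abs_nonneg _) h
  rw [he, abs_div, abs_two]
  linarith [abs_nonneg (a - b)]

/-- Splitting Lemma: a multiset of at most `2^i` items can be split into two halves,
each with at most `2^(i-1)` items, approximately halving both weight and profit. -/
theorem splitting_lemma (n : ℕ) (w p : Fin n → ℕ) (wmax pmax : ℕ)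
    (hw1 : ∀ k, 1 ≤ w k) (hwub : ∀ k, w k ≤ wmax) (hpub : ∀ k, p k ≤ pmax)
    (i : ℕ) (hi : 1 ≤ i) (x : Fin n → ℕ) (hx : ∑ k, x k ≤ 2 ^ i) :
    ∃ x₁ x₂ : Fin n → ℕ, x = x₁ + x₂ ∧
      ∑ k, x₁ k ≤ 2 ^ (i - 1) ∧ ∑ k, x₂ k ≤ 2 ^ (i - 1) ∧
      |((∑ k, x₁ k * w k : ℕ) : ℝ) - ((∑ k, x k * w k : ℕ) : ℝ) / 2|
        ≤ 2 * ((pmax : ℝ) + wmax) ∧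
      |((∑ k, x₂ k * w k : ℕ) : ℝ) - ((∑ k, x k * w k : ℕ) : ℝ) / 2|
        ≤ 2 * ((pmax : ℝ) + wmax) ∧
      |((∑ k, x₁ k * p k : ℕ) : ℝ) - ((∑ k, x k * p k : ℕ) : ℝ) / 2|
        ≤ 2 * ((pmax : ℝ) + wmax) ∧
      |((∑ k, x₂ k * p k : ℕ) : ℝ) - ((∑ k, x k * p k : ℕ) : ℝ) / 2|
        ≤ 2 * ((pmax : ℝ) + wmax) := by
  classical
  set L0 : List (Fin n) := (List.finRange n).flatMap (fun k => List.replicate (x k) k) with hL0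
  set le : Fin n → Fin n → Bool := fun a b => decide (w b ≤ w a) with hle
  set L : List (Fin n) := L0.mergeSort le with hLdef
  have hLperm : L.Perm L0 := List.mergeSort_perm L0 le
  have hsort : L.Pairwise (fun a b => w b ≤ w a) := by
    have := List.pairwise_mergeSort (le := le)
      (fun a b c hab hbc => by
        simp only [hle, decide_eq_true_eq] at *; omega)
      (fun a b => by simp only [hle, Bool.or_eq_true, decide_eq_true_eq]; omega) L0
    exact this.imp (fun h => by simpa [hle] using h)
  have hcountL0 : ∀ k, L0.count k = x k := by
    intro k
    rw [hL0, List.count_flatMap]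
    have h1 : ∀ j : Fin n, (List.count k ∘ fun j => List.replicate (x j) j) j
        = if j = k then x j else 0 := by
      intro j; simp [List.count_replicate]
    rw [List.map_congr_left (fun j _ => h1 j)]
    rw [show (List.map (fun j => if j = k then x j else 0) (List.finRange n)).sum
        = ∑ j, (if j = k then x j else 0) by simp [Finset.sum, List.ofFn_eq_map]]
    simp
  have hcountL : ∀ k, L.count k = x k := fun k => (hLperm.count_eq k).trans (hcountL0 k)
  obtain ⟨A, B, hperm, hlA, hlB, hdw, hdp⟩ :=
    split_aux w p pmax hpub L.length L le_rfl hsort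
  have hwA : (A.map w).sum = ∑ k, A.count k * w k := sum_map_eq_sum_count A w
  have hwB : (B.map w).sum = ∑ k, B.count k * w k := sum_map_eq_sum_count B w
  have hpA : (A.map p).sum = ∑ k, A.count k * p k := sum_map_eq_sum_count A p
  have hpB : (B.map p).sum = ∑ k, B.count k * p k := sum_map_eq_sum_count B p
  have hsum_w : (∑ k, A.count k * w k) + (∑ k, B.count k * w k) = ∑ k, x k * w k := by
    rw [← hwA, ← hwB, ← List.sum_append, ← List.map_append]
    rw [(hperm.map w).sum_eq, sum_map_eq_sum_count]
    exact Finset.sum_congr rfl (fun k _ => by rw [hcountL k])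
  have hsum_p : (∑ k, A.count k * p k) + (∑ k, B.count k * p k) = ∑ k, x k * p k := by
    rw [← hpA, ← hpB, ← List.sum_append, ← List.map_append]
    rw [(hperm.map p).sum_eq, sum_map_eq_sum_count]
    exact Finset.sum_congr rfl (fun k _ => by rw [hcountL k])
  have hhead : (L.head?.elim 0 w : ℕ) ≤ wmax := by
    cases hLL : L with
    | nil => simp
    | cons a L' => simpa using hwub a
  have habs_wA : |((∑ k, A.count k * w k : ℕ) : ℝ) - ((∑ k, B.count k * w k : ℕ) : ℝ)|
      ≤ (wmax : ℝ) := by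
    have h1 : |((∑ k, A.count k * w k : ℕ) : ℤ) - ((∑ k, B.count k * w k : ℕ) : ℤ)|
        ≤ (wmax : ℤ) := by
      rw [← hwA, ← hwB]; exact le_trans hdw (by exact_mod_cast hhead)
    rw [abs_le] at h1 ⊢
    constructor <;> [exact_mod_cast h1.1; exact_mod_cast h1.2]
  have habs_wB : |((∑ k, B.count k * w k : ℕ) : ℝ) - ((∑ k, A.count k * w k : ℕ) : ℝ)|
      ≤ (wmax : ℝ) := by rw [abs_sub_comm]; exact habs_wA
  have habs_pA : |((∑ k, A.count k * p k : ℕ) : ℝ) - ((∑ k, B.count k * p k : ℕ) : ℝ)|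
      ≤ (pmax : ℝ) := by
    have h1 : |((∑ k, A.count k * p k : ℕ) : ℤ) - ((∑ k, B.count k * p k : ℕ) : ℤ)|
        ≤ (pmax : ℤ) := by rw [← hpA, ← hpB]; exact hdp
    rw [abs_le] at h1 ⊢
    constructor <;> [exact_mod_cast h1.1; exact_mod_cast h1.2]
  have habs_pB : |((∑ k, B.count k * p k : ℕ) : ℝ) - ((∑ k, A.count k * p k : ℕ) : ℝ)|
      ≤ (pmax : ℝ) := by rw [abs_sub_comm]; exact habs_pA
  have hQ : (0:ℝ) ≤ pmax := Nat.cast_nonneg _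
  have hW : (0:ℝ) ≤ wmax := Nat.cast_nonneg _
  have hlenL : L.length = ∑ k, x k := by
    rw [length_eq_sum_count]
    exact Finset.sum_congr rfl (fun k _ => hcountL k)
  have h2 : 2 ^ i = 2 * 2 ^ (i - 1) := by
    conv_lhs => rw [show i = (i - 1) + 1 by omega]
    ring
  refine ⟨fun k => A.count k, fun k => B.count k, ?_, ?_, ?_, ?_, ?_, ?_, ?_⟩
  · funext k
    have hc := hperm.count_eq k
    rw [List.count_append] at hc
    simp only [Pi.add_apply]
    rw [hcountL k] at hc
    omega
  · rw [← length_eq_sum_count]; omega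
  · rw [← length_eq_sum_count]; omega
  · refine le_trans (half_bound _ ((∑ k, B.count k * w k : ℕ) : ℝ) _ (wmax : ℝ)
      ?_ habs_wA) (by linarith)
    exact_mod_cast congrArg (Nat.cast : ℕ → ℝ) hsum_w
  · refine le_trans (half_bound _ ((∑ k, A.count k * w k : ℕ) : ℝ) _ (wmax : ℝ)
      ?_ habs_wB) (by linarith)
    rw [add_comm]
    exact_mod_cast congrArg (Nat.cast : ℕ → ℝ) hsum_w
  · refine le_trans (half_bound _ ((∑ k, B.count k * p k : ℕ) : ℝ) _ (pmax : ℝ)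
      ?_ habs_pA) (by linarith)
    exact_mod_cast congrArg (Nat.cast : ℕ → ℝ) hsum_p
  · refine le_trans (half_bound _ ((∑ k, A.count k * p k : ℕ) : ℝ) _ (pmax : ℝ)
      ?_ habs_pB) (by linarith)
    rw [add_comm]
    exact_mod_cast congrArg (Nat.cast : ℕ → ℝ) hsum_p
end

section
/- (Steinitz Lemma, dimension m, ℓ∞ norm.) Let v₁, ..., v_t ∈ ℝ^m satisfy ‖v_j‖∞ ≤ 1 for all j and v₁ + ... + v_t = 0. Then there exists a permutation π of {1,...,t} such that for every k ∈ {1,...,t}, ‖v_{π(1)} + ... + v_{π(k)}‖∞ ≤ m. -/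
/-!
Grinberg–Sevastyanov argument, for an arbitrary norm on a real space of dimension `d`.
Call `S` balanced if there are weights `w ∈ [0,1]^S` with `∑ w = max (|S| - d) 0` and
`∑ w i • v i = 0`. Then `∑_S v = ∑_S (1 - w i) • v i` has norm at most `∑ (1 - w i) ≤ d`.
The whole index set is balanced by constant weights. If `S` is balanced and `|S| ≥ d + 2`,
rescaling shows that the polytope `{w ∈ [0,1]^S | ∑ w = |S| - (d + 1), ∑ w i • v i = 0}` is
nonempty; at a vertex at most `d + 1` weights are fractional (there are `d + 1` equality
constraints), so the total `|S| - (d + 1)` forces some weight to vanish, and dropping that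
index leaves a balanced set. Removing indices one at a time and listing them in reverse gives
the permutation.
-/

open Finset Module
open scoped Topology

variable {ι E : Type*}

theorem exists_nontrivial_affine_relation_of_finrank_succ_lt_card {K : Type*} [Field K]
    [AddCommGroup E] [Module K E] [FiniteDimensional K E] (v : ι → E) {F : Finset ι}
    (hF : finrank K E + 1 < #F) :
    ∃ g : ι → K, (∀ i ∉ F, g i = 0) ∧ ∑ i ∈ F, g i • v i = 0 ∧ ∑ i ∈ F, g i = 0 ∧
      ∃ i ∈ F, g i ≠ 0 := by
  classical
  have hdep : ¬LinearIndepOn K (fun i => (v i, (1 : K))) (F : Set ι) := fun h => by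
    have := h.fintype_card_le_finrank
    simp only [Finset.coe_sort_coe, Fintype.card_coe, finrank_prod, finrank_self] at this
    omega
  obtain ⟨f, hf, i, hi, hfi⟩ := not_linearIndepOn_finset_iff.1 hdep
  refine ⟨fun j => if j ∈ F then f j else 0, fun j hj => if_neg hj, ?_, ?_, i, hi, by simpa [hi]⟩
  · simpa [ite_smul, Prod.fst_sum] using congrArg Prod.fst hf
  · simpa [Prod.snd_sum] using congrArg Prod.snd hf

theorem exists_eq_zero_of_card_fractional_le {S : Finset ι} {w : ι → ℝ}
    (hw : ∀ i ∈ S, w i ∈ Set.Icc 0 1)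
    (hcard : (#{i ∈ S | w i ∈ Set.Ioo 0 1} : ℝ) ≤ #S - ∑ i ∈ S, w i)
    (hlt : ∑ i ∈ S, w i < #S) : ∃ i ∈ S, w i = 0 := by
  by_contra! hpos
  set F := {i ∈ S | w i ∈ Set.Ioo 0 1}
  have hdeficit : ∑ i ∈ F, (1 - w i) = #S - ∑ i ∈ S, w i := by
    rw [sum_subset (filter_subset _ S), sum_sub_distrib, sum_const, nsmul_one]
    intro i hiS hiF
    by_contra h1
    exact hiF (mem_filter.2 ⟨hiS, (hw i hiS).1.lt_of_ne' (hpos i hiS),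
      (hw i hiS).2.lt_of_ne (sub_ne_zero.1 h1).symm⟩)
  rcases F.eq_empty_or_nonempty with hF | hF
  · simp only [hF, sum_empty] at hdeficit
    linarith
  · have : ∑ i ∈ F, (1 - w i) < #F := by
      simpa using sum_lt_sum_of_nonempty hF fun i hi => sub_lt_self 1 (mem_filter.1 hi).2.1
    linarith

section Weights

variable [NormedAddCommGroup E] [NormedSpace ℝ E] (v : ι → E) (S : Finset ι) (s : ℝ)

-- Weights off `S` are also confined to `[0,1]`, so that this set is compact.
def balancingWeights : Set (ι → ℝ) :=
  {w | (∀ i, w i ∈ Set.Icc 0 1) ∧ ∑ i ∈ S, w i = s ∧ ∑ i ∈ S, w i • v i = 0}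

theorem isCompact_balancingWeights [Finite ι] : IsCompact (balancingWeights v S s) := by
  refine (isCompact_univ_pi fun _ => isCompact_Icc (a := (0 : ℝ)) (b := 1)).of_isClosed_subset
    ?_ fun w hw i _ => hw.1 i
  simp only [balancingWeights, Set.ofPred_and, Set.ofPred_forall]
  exact (isClosed_iInter fun i => isClosed_Icc.preimage (continuous_apply i)).inter
    ((isClosed_eq (by fun_prop) continuous_const).inter
      (isClosed_eq (by fun_prop) continuous_const))

variable {v S s}

theorem add_smul_mem_balancingWeights {w g : ι → ℝ} (hw : w ∈ balancingWeights v S s)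
    (hgs : ∑ i ∈ S, g i = 0) (hgv : ∑ i ∈ S, g i • v i = 0) {δ : ℝ}
    (hδ : ∀ i, w i + δ * g i ∈ Set.Icc 0 1) : w + δ • g ∈ balancingWeights v S s := by
  obtain ⟨-, hws, hwv⟩ := hw
  refine ⟨hδ, ?_, ?_⟩
  · simp [sum_add_distrib, ← mul_sum, hws, hgs]
  · simp [add_smul, sum_add_distrib, mul_smul, ← smul_sum, hwv, hgv]

theorem card_fractional_le_of_mem_extremePoints [FiniteDimensional ℝ E] {w : ι → ℝ}
    (hw : w ∈ (balancingWeights v S s).extremePoints ℝ) :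
    #{i ∈ S | w i ∈ Set.Ioo 0 1} ≤ finrank ℝ E + 1 := by
  set F := {i ∈ S | w i ∈ Set.Ioo 0 1}
  by_contra! hF
  obtain ⟨hwP, hext⟩ := mem_extremePoints.1 hw
  obtain ⟨g, hgF, hgv, hgs, i, hiF, hgi⟩ :=
    exists_nontrivial_affine_relation_of_finrank_succ_lt_card (K := ℝ) v hF
  have hgs' : ∑ j ∈ S, g j = 0 := by
    rwa [← sum_subset (filter_subset _ S) fun j _ hj => hgF j hj]
  have hgv' : ∑ j ∈ S, g j • v j = 0 := by
    rwa [← sum_subset (filter_subset _ S) fun j _ hj => by rw [hgF j hj, zero_smul]]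
  have hmem : ∀ δ, (∀ j ∈ F, w j + δ * g j ∈ Set.Ioo 0 1) →
      w + δ • g ∈ balancingWeights v S s := by
    refine fun δ hδ => add_smul_mem_balancingWeights hwP hgs' hgv' fun j => ?_
    by_cases hj : j ∈ F
    · exact Set.Ioo_subset_Icc_self (hδ j hj)
    · simpa [hgF j hj] using hwP.1 j
  have hsmall : ∀ᶠ δ in 𝓝 (0 : ℝ), ∀ j ∈ F,
      w j + δ * g j ∈ Set.Ioo 0 1 ∧ w j + -δ * g j ∈ Set.Ioo 0 1 := by
    refine (Filter.eventually_all_finset F).2 fun j hj => ?_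
    have hj := (mem_filter.1 hj).2
    have hnhds : ∀ f : ℝ → ℝ, Continuous f → f 0 = w j → ∀ᶠ δ in 𝓝 0, f δ ∈ Set.Ioo 0 1 :=
      fun f hf hf0 => hf.continuousAt.preimage_mem_nhds (hf0 ▸ Ioo_mem_nhds hj.1 hj.2)
    exact (hnhds _ (by fun_prop) (by simp)).and (hnhds _ (by fun_prop) (by simp))
  obtain ⟨ε, hε, hεpos⟩ :=
    ((hsmall.filter_mono (nhdsWithin_le_nhds (s := Set.Ioi 0))).and self_mem_nhdsWithin).exists
  have hw_mid : w ∈ openSegment ℝ (w + ε • g) (w + (-ε) • g) :=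
    ⟨1/2, 1/2, by norm_num, by norm_num, by norm_num, by ext; simp; ring⟩
  have hεg := congrFun (hext _ (hmem ε fun j hj => (hε j hj).1) _
    (hmem (-ε) fun j hj => (hε j hj).2) hw_mid).1 i
  have : ε * g i = 0 := by simpa using hεg
  exact hgi ((mul_eq_zero.1 this).resolve_left (ne_of_gt hεpos))

theorem smul_mem_balancingWeights {w : ι → ℝ} (hw : w ∈ balancingWeights v S s) {r : ℝ}
    (hr : r ∈ Set.Icc 0 1) : r • w ∈ balancingWeights v S (r * s) := by
  obtain ⟨hw01, hws, hwv⟩ := hw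
  refine ⟨fun i => ⟨mul_nonneg hr.1 (hw01 i).1, mul_le_one₀ hr.2 (hw01 i).1 (hw01 i).2⟩, ?_, ?_⟩
  · simp [← mul_sum, hws]
  · simp [mul_smul, ← smul_sum, hwv]

theorem mem_balancingWeights_erase [DecidableEq ι] {w : ι → ℝ} (hw : w ∈ balancingWeights v S s)
    {i : ι} (hi : w i = 0) : w ∈ balancingWeights v (S.erase i) s := by
  obtain ⟨hw01, hws, hwv⟩ := hw
  exact ⟨hw01, by rwa [sum_erase _ hi], by rwa [sum_erase _ (by rw [hi, zero_smul])]⟩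

variable (v S) in
def HasBalancingWeights : Prop :=
  (balancingWeights v S (max ((#S : ℝ) - finrank ℝ E) 0)).Nonempty

theorem hasBalancingWeights_of_sum_eq_zero (h : ∑ i ∈ S, v i = 0) : HasBalancingWeights v S := by
  set c := max ((#S : ℝ) - finrank ℝ E) 0
  have hc : c ≤ #S := max_le (by linarith [(finrank ℝ E).cast_nonneg (α := ℝ)]) (by positivity)
  refine ⟨fun _ => c / #S, fun _ => ⟨by positivity, div_le_one_of_le₀ hc (by positivity)⟩, ?_, ?_⟩
  · rcases eq_or_ne (#S : ℝ) 0 with h0 | h0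
    · simp [h0, c]
    · rw [sum_const, nsmul_eq_mul, mul_div_cancel₀ _ h0]
  · rw [← smul_sum, h, smul_zero]

theorem norm_sum_le_finrank_of_hasBalancingWeights (hv : ∀ i, ‖v i‖ ≤ 1)
    (h : HasBalancingWeights v S) : ‖∑ i ∈ S, v i‖ ≤ finrank ℝ E := by
  obtain ⟨w, hw01, hws, hwv⟩ := h
  calc ‖∑ i ∈ S, v i‖ = ‖∑ i ∈ S, (1 - w i) • v i‖ := by
        simp [sub_smul, sum_sub_distrib, hwv]
    _ ≤ ∑ i ∈ S, ‖(1 - w i) • v i‖ := norm_sum_le _ _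
    _ ≤ ∑ i ∈ S, (1 - w i) := sum_le_sum fun i _ => by
        rw [norm_smul, Real.norm_of_nonneg (sub_nonneg.2 (hw01 i).2)]
        exact mul_le_of_le_one_right (sub_nonneg.2 (hw01 i).2) (hv i)
    _ = #S - max ((#S : ℝ) - finrank ℝ E) 0 := by simp [sum_sub_distrib, hws]
    _ ≤ finrank ℝ E := by linarith [le_max_left ((#S : ℝ) - finrank ℝ E) 0]

theorem HasBalancingWeights.exists_erase [Finite ι] [FiniteDimensional ℝ E] [DecidableEq ι]
    (h : HasBalancingWeights v S) (hne : S.Nonempty) :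
    ∃ i ∈ S, HasBalancingWeights v (S.erase i) := by
  obtain ⟨w, hw⟩ := h
  set d := finrank ℝ E
  rcases le_or_gt #S (d + 1) with hsmall | hlarge
  · obtain ⟨i, hi⟩ := hne
    refine ⟨i, hi, 0, fun _ => by simp, ?_, by simp⟩
    simpa [card_erase_of_mem hi] using (by omega : #S - 1 ≤ d)
  have hcast : (d : ℝ) + 2 ≤ #S := by exact_mod_cast hlarge
  rw [max_eq_left (by linarith)] at hw
  have hpos : (0 : ℝ) < #S - d := by linarith
  set s₀ : ℝ := #S - (d + 1)
  have hne' : (balancingWeights v S s₀).Nonempty := by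
    have hr : s₀ / (#S - d) ∈ Set.Icc (0 : ℝ) 1 :=
      ⟨div_nonneg (by linarith) hpos.le, (div_le_one hpos).2 (by linarith)⟩
    exact ⟨_, div_mul_cancel₀ s₀ hpos.ne' ▸ smul_mem_balancingWeights hw hr⟩
  obtain ⟨w', hw'⟩ := (isCompact_balancingWeights v S s₀).extremePoints_nonempty hne'
  obtain ⟨hw'01, hw's, -⟩ := hw'.1
  have hfrac : (#{i ∈ S | w' i ∈ Set.Ioo 0 1} : ℝ) ≤ d + 1 := by
    exact_mod_cast card_fractional_le_of_mem_extremePoints hw'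
  obtain ⟨i, hi, hw'i⟩ := exists_eq_zero_of_card_fractional_le (fun i _ => hw'01 i)
    (by rw [hw's]; linarith) (by rw [hw's]; linarith)
  refine ⟨i, hi, w', ?_⟩
  convert mem_balancingWeights_erase hw'.1 hw'i using 2
  rw [card_erase_of_mem hi, Nat.cast_sub (by omega), max_eq_left (by push_cast; linarith)]
  push_cast
  ring

end Weights

theorem exists_list_forall_take_of_exists_erase {α : Type*} [DecidableEq α] (P : Finset α → Prop)
    (hP : ∀ S, P S → S.Nonempty → ∃ i ∈ S, P (S.erase i)) (S : Finset α) (hS : P S) :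
    ∃ l : List α, l.Nodup ∧ l.toFinset = S ∧ ∀ k, P (l.take k).toFinset := by
  induction S using Finset.strongInduction with | H S ih =>
  rcases S.eq_empty_or_nonempty with rfl | hne
  · exact ⟨[], List.nodup_nil, rfl, fun k => by simpa using hS⟩
  obtain ⟨i, hi, hPi⟩ := hP S hS hne
  obtain ⟨l, hl, hlS, hlP⟩ := ih _ (erase_ssubset hi) hPi
  have hil : i ∉ l := by rw [← List.mem_toFinset, hlS]; exact notMem_erase i S
  have hlS' : (l ++ [i]).toFinset = S := by
    rw [List.toFinset_append, hlS]; simp [insert_erase hi]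
  refine ⟨l ++ [i], hl.append (List.nodup_singleton i) (by simpa using hil), hlS', fun k => ?_⟩
  rcases le_or_gt k l.length with hk | hk
  · rw [List.take_append_of_le_length hk]; exact hlP k
  · rwa [List.take_of_length_le (by simp; omega), hlS']

theorem List.Nodup.exists_perm_map_filter_lt_eq_toFinset_take {n : ℕ} {l : List (Fin n)}
    (hl : l.Nodup) (hlS : l.toFinset = univ) :
    ∃ π : Equiv.Perm (Fin n), ∀ k,
      (univ.filter fun j : Fin n => (j : ℕ) < k).map π.toEmbedding = (l.take k).toFinset := by
  have hlen : l.length = n := by simpa [hlS] using (List.toFinset_card_of_nodup hl).symm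
  refine ⟨(finCongr hlen.symm).trans (hl.getEquivOfForallMemList l fun x => by
    simp [← List.mem_toFinset, hlS]), fun k => ?_⟩
  ext x
  simp only [Finset.mem_map, Finset.mem_filter, mem_univ, true_and, Equiv.coe_toEmbedding,
    Equiv.trans_apply, finCongr_apply, List.Nodup.getEquivOfForallMemList_apply,
    List.mem_toFinset, List.mem_take_iff_getElem, lt_min_iff]
  constructor
  · rintro ⟨a, hak, rfl⟩
    exact ⟨a, ⟨hak, hlen.symm ▸ a.2⟩, rfl⟩
  · rintro ⟨j, ⟨hjk, hjl⟩, rfl⟩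
    exact ⟨⟨j, hlen ▸ hjl⟩, hjk, rfl⟩

theorem exists_perm_forall_prefix_of_exists_erase {n : ℕ} (P : Finset (Fin n) → Prop)
    (hP : ∀ S, P S → S.Nonempty → ∃ i ∈ S, P (S.erase i)) (huniv : P univ) :
    ∃ π : Equiv.Perm (Fin n), ∀ k,
      P ((univ.filter fun j : Fin n => (j : ℕ) < k).map π.toEmbedding) := by
  obtain ⟨l, hl, hlS, hlP⟩ := exists_list_forall_take_of_exists_erase P hP univ huniv
  obtain ⟨π, hπ⟩ := hl.exists_perm_map_filter_lt_eq_toFinset_take hlS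
  exact ⟨π, fun k => hπ k ▸ hlP k⟩

theorem exists_perm_norm_sum_prefix_le_finrank [NormedAddCommGroup E] [NormedSpace ℝ E]
    [FiniteDimensional ℝ E] {n : ℕ} (v : Fin n → E) (hv : ∀ i, ‖v i‖ ≤ 1) (hs : ∑ i, v i = 0) :
    ∃ π : Equiv.Perm (Fin n), ∀ k,
      ‖∑ j ∈ univ.filter (fun j : Fin n => (j : ℕ) < k), v (π j)‖ ≤ finrank ℝ E := by
  obtain ⟨π, hπ⟩ := exists_perm_forall_prefix_of_exists_erase (HasBalancingWeights v)
    (fun S hS hne => hS.exists_erase hne) (hasBalancingWeights_of_sum_eq_zero hs)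
  refine ⟨π, fun k => ?_⟩
  simpa [sum_map] using norm_sum_le_finrank_of_hasBalancingWeights hv (hπ k)

/-- Steinitz Lemma in dimension `m` for the ℓ∞ norm: if `t` vectors each with
ℓ∞ norm at most 1 sum to zero, they can be permuted so that every prefix sum
has ℓ∞ norm at most `m`. -/
theorem steinitz_lemma (m t : ℕ) (v : Fin t → Fin m → ℝ)
    (hb : ∀ j c, |v j c| ≤ 1) (hs : ∑ j, v j = 0) :
    ∃ π : Equiv.Perm (Fin t), ∀ k : ℕ, k ≤ t → ∀ c : Fin m,
      |∑ j ∈ Finset.univ.filter (fun j : Fin t => (j : ℕ) < k), v (π j) c| ≤ m := by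
  have hv : ∀ j, ‖v j‖ ≤ 1 := fun j =>
    (pi_norm_le_iff_of_nonneg zero_le_one).2 fun c => (Real.norm_eq_abs _).trans_le (hb j c)
  obtain ⟨π, hπ⟩ := exists_perm_norm_sum_prefix_le_finrank v hv hs
  refine ⟨π, fun k _ c => ?_⟩
  calc |∑ j ∈ Finset.univ.filter (fun j : Fin t => (j : ℕ) < k), v (π j) c|
      = ‖(∑ j ∈ Finset.univ.filter (fun j : Fin t => (j : ℕ) < k), v (π j)) c‖ := by
        rw [Finset.sum_apply, Real.norm_eq_abs]
    _ ≤ ‖∑ j ∈ Finset.univ.filter (fun j : Fin t => (j : ℕ) < k), v (π j)‖ :=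
        norm_le_pi_norm _ c
    _ ≤ finrank ℝ (Fin m → ℝ) := hπ k
    _ = m := by rw [finrank_fin_fun]
end

section
/- Define 𝒫_i[j] = max{p(x) : x ∈ ℕ^n, w(x) ≤ j, ‖x‖₁ ≤ 2^i} for an Unbounded Knapsack instance. Then for every i ≥ 1 and every j ∈ [0, w], 𝒫_i[j] = max{𝒫_{i-1}[j₁] + 𝒫_{i-1}[j₂] : j₁ + j₂ = j, j₁, j₂ ≥ 0}. In other words, 𝒫_i[0..w] equals the (max,+)-convolution of 𝒫_{i-1}[0..w] with itself, restricted to indices up to w. -/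
/-- Split a sum bounded by `a + b` into two parts bounded by `a` and `b`. -/
lemma split_sum {ι : Type*} [DecidableEq ι] (s : Finset ι) (x : ι → ℕ) :
    ∀ a b : ℕ, (∑ k ∈ s, x k) ≤ a + b →
      ∃ y z : ι → ℕ, (∀ k ∈ s, x k = y k + z k) ∧
        (∑ k ∈ s, y k) ≤ a ∧ (∑ k ∈ s, z k) ≤ b := by
  induction s using Finset.induction_on with
  | empty =>
    intro a b _
    exact ⟨fun _ => 0, fun _ => 0, fun k hk => absurd hk (by simp), by simp, by simp⟩
  | @insert j s' hjmem ih =>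
    intro a b hsum
    rw [Finset.sum_insert hjmem] at hsum
    by_cases hxa : x j ≤ a
    · obtain ⟨y, z, hxyz, hy, hz⟩ := ih (a - x j) b (by omega)
      refine ⟨Function.update y j (x j), Function.update z j 0, ?_, ?_, ?_⟩
      · intro k hk
        rcases Finset.mem_insert.mp hk with rfl | hk
        · simp
        · have hne : k ≠ j := fun h => hjmem (h ▸ hk)
          simp [Function.update_of_ne hne, hxyz k hk]
      · rw [Finset.sum_insert hjmem, Function.update_self,
          Finset.sum_congr rfl (fun k hk =>
            Function.update_of_ne (ne_of_mem_of_not_mem hk hjmem) _ _)]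
        omega
      · rw [Finset.sum_insert hjmem, Function.update_self,
          Finset.sum_congr rfl (fun k hk =>
            Function.update_of_ne (ne_of_mem_of_not_mem hk hjmem) _ _)]
        omega
    · obtain ⟨y, z, hxyz, hy, hz⟩ := ih 0 (b - (x j - a)) (by omega)
      refine ⟨Function.update y j a, Function.update z j (x j - a), ?_, ?_, ?_⟩
      · intro k hk
        rcases Finset.mem_insert.mp hk with rfl | hk
        · simp; omega
        · have hne : k ≠ j := fun h => hjmem (h ▸ hk)
          simp [Function.update_of_ne hne, hxyz k hk]
      · rw [Finset.sum_insert hjmem, Function.update_self,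
          Finset.sum_congr rfl (fun k hk =>
            Function.update_of_ne (ne_of_mem_of_not_mem hk hjmem) _ _)]
        omega
      · rw [Finset.sum_insert hjmem, Function.update_self,
          Finset.sum_congr rfl (fun k hk =>
            Function.update_of_ne (ne_of_mem_of_not_mem hk hjmem) _ _)]
        omega

/-- Halving Lemma: the profit sequence for solutions with at most `2^i` items
is the (max,+)-convolution of the profit sequence for at most `2^(i-1)` items
with itself. -/
theorem halving_lemma (n : ℕ) (w p : Fin n → ℕ) (hw1 : ∀ k, 1 ≤ w k)
    (P : ℕ → ℕ → ℕ)
    (hP : ∀ i j, P i j =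
      sSup {v | ∃ x : Fin n → ℕ,
        ∑ k, x k * w k ≤ j ∧ ∑ k, x k ≤ 2 ^ i ∧ v = ∑ k, x k * p k})
    (i : ℕ) (hi : 1 ≤ i) (wcap : ℕ) (j : ℕ) (hj : j ≤ wcap) :
    P i j = sSup {v | ∃ j₁ j₂ : ℕ, j₁ + j₂ = j ∧
      v = P (i - 1) j₁ + P (i - 1) j₂} := by
  -- abbreviation for the feasible-value sets
  set S : ℕ → ℕ → Set ℕ := fun i j => {v | ∃ x : Fin n → ℕ,
    ∑ k, x k * w k ≤ j ∧ ∑ k, x k ≤ 2 ^ i ∧ v = ∑ k, x k * p k} with hS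
  have hSne : ∀ i j, (S i j).Nonempty := by
    intro i j
    exact ⟨0, fun _ => 0, by simp, by simp, by simp⟩
  have hSbdd : ∀ i j, BddAbove (S i j) := by
    intro i j
    refine ⟨∑ k, j * p k, ?_⟩
    rintro v ⟨x, hwle, -, rfl⟩
    apply Finset.sum_le_sum
    intro k _
    have h1 : x k * w k ≤ j :=
      le_trans (Finset.single_le_sum (f := fun k => x k * w k) (fun _ _ => Nat.zero_le _)
        (Finset.mem_univ k)) hwle
    have h2 : x k ≤ j := le_trans (Nat.le_mul_of_pos_right _ (hw1 k)) h1
    exact Nat.mul_le_mul_right _ h2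
  -- membership gives a lower bound on P
  have hPmem : ∀ i j v, v ∈ S i j → v ≤ P i j := by
    intro i j v hv
    rw [hP]
    exact le_csSup (hSbdd i j) hv
  -- P i j is achieved
  have hPach : ∀ i j, P i j ∈ S i j := by
    intro i j
    rw [hP]
    exact Nat.sSup_mem (hSne i j) (hSbdd i j)
  set T : Set ℕ := {v | ∃ j₁ j₂ : ℕ, j₁ + j₂ = j ∧
    v = P (i - 1) j₁ + P (i - 1) j₂} with hT
  -- every element of T is ≤ P i j
  have hTle : ∀ v ∈ T, v ≤ P i j := by
    rintro v ⟨j₁, j₂, hj12, rfl⟩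
    obtain ⟨x₁, hw1', hc1, hp1⟩ := hPach (i - 1) j₁
    obtain ⟨x₂, hw2', hc2, hp2⟩ := hPach (i - 1) j₂
    apply hPmem i j
    refine ⟨x₁ + x₂, ?_, ?_, ?_⟩
    · simp only [Pi.add_apply, add_mul, Finset.sum_add_distrib]
      omega
    · simp only [Pi.add_apply, Finset.sum_add_distrib]
      have : 2 ^ (i - 1) + 2 ^ (i - 1) = 2 ^ i := by
        rw [← two_mul, ← pow_succ', Nat.sub_add_cancel hi]
      omega
    · simp only [Pi.add_apply, add_mul, Finset.sum_add_distrib]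
      omega
  have hTne : T.Nonempty := ⟨P (i - 1) 0 + P (i - 1) j, 0, j, by simp, rfl⟩
  have hTbdd : BddAbove T := ⟨P i j, fun v hv => hTle v hv⟩
  apply le_antisymm
  · -- P i j ≤ sSup T : split the optimal solution
    obtain ⟨x, hwx, hcx, hpx⟩ := hPach i j
    have hcx' : (∑ k, x k) ≤ 2 ^ (i - 1) + 2 ^ (i - 1) := by
      have h2 : 2 ^ (i - 1) + 2 ^ (i - 1) = 2 ^ i := by
        rw [← two_mul, ← pow_succ', Nat.sub_add_cancel hi]
      omega
    obtain ⟨y, z, hxyz, hy, hz⟩ :=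
      split_sum Finset.univ x (2 ^ (i - 1)) (2 ^ (i - 1)) hcx'
    have hxyz' : ∀ k, x k = y k + z k := fun k => hxyz k (Finset.mem_univ k)
    have hwsplit : (∑ k, x k * w k) = (∑ k, y k * w k) + (∑ k, z k * w k) := by
      rw [← Finset.sum_add_distrib]
      exact Finset.sum_congr rfl fun k _ => by rw [hxyz' k, add_mul]
    have hpsplit : (∑ k, x k * p k) = (∑ k, y k * p k) + (∑ k, z k * p k) := by
      rw [← Finset.sum_add_distrib]
      exact Finset.sum_congr rfl fun k _ => by rw [hxyz' k, add_mul]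
    set j₁ := ∑ k, y k * w k with hj₁
    have hj₁le : j₁ ≤ j := by rw [hwsplit] at hwx; omega
    have hyP : (∑ k, y k * p k) ≤ P (i - 1) j₁ :=
      hPmem _ _ _ ⟨y, le_refl _, hy, rfl⟩
    have hzP : (∑ k, z k * p k) ≤ P (i - 1) (j - j₁) := by
      apply hPmem _ _ _ ⟨z, ?_, hz, rfl⟩
      rw [hwsplit] at hwx; omega
    calc P i j = (∑ k, y k * p k) + (∑ k, z k * p k) := by rw [hpx, hpsplit]
      _ ≤ P (i - 1) j₁ + P (i - 1) (j - j₁) := by omega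
      _ ≤ sSup T := le_csSup hTbdd ⟨j₁, j - j₁, by omega, rfl⟩
  · exact csSup_le hTne hTle
end

section
/- In an Unbounded Knapsack instance, let item i* maximize the profit-to-weight ratio p_i/w_i. If the capacity satisfies W ≥ 2·w_max³ and there is at most one item of each distinct weight, then there exists an optimal solution x ∈ ℕ^n with x_{i*} ≥ 1. -/
/-- If the capacity satisfies `W ≥ 2·wmax³` and there is at most one item per
distinct weight, then some optimal Unbounded Knapsack solution contains the item
with the best profit-to-weight ratio. -/
theorem greedy_item_in_optimal (n : ℕ) (w p : Fin n → ℕ) (wmax W : ℕ)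
    (hw1 : ∀ k, 1 ≤ w k) (hwub : ∀ k, w k ≤ wmax)
    (hinj : Function.Injective w)
    (istar : Fin n) (hstar : ∀ k, p k * w istar ≤ p istar * w k)
    (hW : 2 * wmax ^ 3 ≤ W) :
    ∃ x : Fin n → ℕ,
      ∑ k, x k * w k ≤ W ∧
      (∀ y : Fin n → ℕ, ∑ k, y k * w k ≤ W → ∑ k, y k * p k ≤ ∑ k, x k * p k) ∧
      1 ≤ x istar := by
  have hwmax : 1 ≤ wmax := le_trans (hw1 istar) (hwub istar)
  -- at most wmax items
  have hn : n ≤ wmax := by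
    have hcard : (Finset.univ.image w).card = n := by
      rw [Finset.card_image_of_injective _ hinj, Finset.card_univ, Fintype.card_fin]
    have hsub : Finset.univ.image w ⊆ Finset.Icc 1 wmax := by
      intro m hm
      simp only [Finset.mem_image] at hm
      obtain ⟨k, _, rfl⟩ := hm
      simp [Finset.mem_Icc, hw1 k, hwub k]
    have h := Finset.card_le_card hsub
    rw [hcard, Nat.card_Icc] at h
    omega
  -- existence of an optimal solution
  obtain ⟨xm, hxmS, hxmmax⟩ := Finset.exists_max_image
    (Finset.univ.filter (fun x : Fin n → Fin (W+1) => ∑ k, (x k : ℕ) * w k ≤ W))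
    (fun x => ∑ k, (x k : ℕ) * p k)
    ⟨fun _ => ⟨0, Nat.succ_pos W⟩, by simp⟩
  set X : Fin n → ℕ := fun k => (xm k : ℕ) with hXdef
  have hXfeas : ∑ k, X k * w k ≤ W := (Finset.mem_filter.mp hxmS).2
  have hXopt : ∀ y : Fin n → ℕ, ∑ k, y k * w k ≤ W → ∑ k, y k * p k ≤ ∑ k, X k * p k := by
    intro y hy
    have hyk : ∀ k, y k < W + 1 := by
      intro k
      have h1 : y k ≤ y k * w k := Nat.le_mul_of_pos_right _ (hw1 k)
      have h2 : y k * w k ≤ ∑ j, y j * w j :=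
        Finset.single_le_sum (f := fun j => y j * w j) (fun j _ => Nat.zero_le _)
          (Finset.mem_univ k)
      omega
    have hy' : (fun k => (⟨y k, hyk k⟩ : Fin (W+1))) ∈
        Finset.univ.filter (fun x : Fin n → Fin (W+1) => ∑ k, (x k : ℕ) * w k ≤ W) := by
      simp only [Finset.mem_filter, Finset.mem_univ, true_and]
      exact hy
    have := hxmmax _ hy'
    simpa using this
  by_cases hx0 : 1 ≤ X istar
  · exact ⟨X, hXfeas, hXopt, hx0⟩
  push_neg at hx0
  have hXi0 : X istar = 0 := by omega
  by_cases hroom : ∑ k, X k * w k + w istar ≤ W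
  · -- just add one copy of istar
    refine ⟨Function.update X istar 1, ?_, ?_, by simp⟩
    · have : ∑ k, Function.update X istar 1 k * w k
          = 1 * w istar + ∑ k ∈ Finset.univ.erase istar, X k * w k := by
        rw [← Finset.add_sum_erase _ _ (Finset.mem_univ istar)]
        simp only [Function.update_self]
        congr 1
        exact Finset.sum_congr rfl (fun k hk => by
          rw [Function.update_of_ne (Finset.mem_erase.mp hk).1])
      rw [this]
      have hsum : ∑ k, X k * w k
          = X istar * w istar + ∑ k ∈ Finset.univ.erase istar, X k * w k :=
        (Finset.add_sum_erase _ _ (Finset.mem_univ istar)).symm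
      rw [hXi0] at hsum
      omega
    · intro y hy
      have h1 := hXopt y hy
      have h2 : ∑ k, X k * p k ≤ ∑ k, Function.update X istar 1 k * p k := by
        have hl : ∑ k, Function.update X istar 1 k * p k
            = 1 * p istar + ∑ k ∈ Finset.univ.erase istar, X k * p k := by
          rw [← Finset.add_sum_erase _ _ (Finset.mem_univ istar)]
          simp only [Function.update_self]
          congr 1
          exact Finset.sum_congr rfl (fun k hk => by
            rw [Function.update_of_ne (Finset.mem_erase.mp hk).1])
        have hr : ∑ k, X k * p k
            = X istar * p istar + ∑ k ∈ Finset.univ.erase istar, X k * p k :=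
          (Finset.add_sum_erase _ _ (Finset.mem_univ istar)).symm
        rw [hXi0] at hr
        omega
      omega
  · -- exchange argument
    push_neg at hroom
    -- total weight is large
    have hpow : wmax ≤ wmax ^ 3 := Nat.le_self_pow (by norm_num) wmax
    have hbig : 2 * wmax ^ 3 - wmax < ∑ k, X k * w k := by
      have : w istar ≤ wmax := hwub istar
      omega
    -- pick j with maximal X j
    have huniv : (Finset.univ : Finset (Fin n)).Nonempty := ⟨istar, Finset.mem_univ istar⟩
    obtain ⟨j, -, hj⟩ := Finset.exists_max_image (Finset.univ : Finset (Fin n)) X huniv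
    have hjmax : ∀ k, X k ≤ X j := fun k => hj k (Finset.mem_univ k)
    -- X j is large
    have hXjbig : wmax ≤ X j := by
      have h1 : ∑ k, X k * w k ≤ ∑ _k : Fin n, X j * wmax := by
        apply Finset.sum_le_sum
        intro k _
        exact Nat.mul_le_mul (hjmax k) (hwub k)
      have h2 : ∑ _k : Fin n, (X j * wmax : ℕ) = n * (X j * wmax) := by
        simp [Finset.sum_const, Finset.card_univ]
      rw [h2] at h1
      have h3 : n * (X j * wmax) ≤ wmax * (X j * wmax) := Nat.mul_le_mul_right _ hn
      have h4 : 2 * wmax ^ 3 - wmax < wmax * (X j * wmax) := by omega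
      by_contra hc
      push_neg at hc
      have h5 : wmax * (X j * wmax) ≤ wmax * (wmax * wmax) := by
        apply Nat.mul_le_mul_left
        exact Nat.mul_le_mul_right _ (by omega)
      have h6 : wmax * (wmax * wmax) = wmax ^ 3 := by ring
      have h7 : wmax ≤ wmax ^ 3 := by
        calc wmax = wmax * 1 * 1 := by ring
        _ ≤ wmax * wmax * wmax := by
            exact Nat.mul_le_mul (Nat.mul_le_mul_left _ hwmax) hwmax
        _ = wmax ^ 3 := by ring
      omega
    have hwi : w istar ≤ X j := le_trans (hwub istar) hXjbig
    have hji : j ≠ istar := by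
      intro h; rw [h] at hXjbig; omega
    -- the exchanged solution
    set Y : Fin n → ℕ := Function.update (Function.update X j (X j - w istar)) istar (w j)
      with hYdef
    have hYi : Y istar = w j := by simp [hYdef, Function.update]
    have hYj : Y j = X j - w istar := by
      simp [hYdef, Function.update_of_ne hji, Function.update_self]
    have hYk : ∀ k, k ≠ istar → k ≠ j → Y k = X k := by
      intro k h1 h2
      simp [hYdef, Function.update_of_ne h1, Function.update_of_ne h2]
    -- sum decomposition lemma
    have hdecomp : ∀ (c q : Fin n → ℕ),
        ∑ k, c k * q k = c istar * q istar + c j * q j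
          + ∑ k ∈ (Finset.univ.erase istar).erase j, c k * q k := by
      intro c q
      rw [← Finset.add_sum_erase _ _ (Finset.mem_univ istar)]
      rw [← Finset.add_sum_erase _ (fun k => c k * q k)
        (Finset.mem_erase.mpr ⟨hji, Finset.mem_univ j⟩)]
      ring
    have hrest : ∀ q : Fin n → ℕ,
        ∑ k ∈ (Finset.univ.erase istar).erase j, Y k * q k
          = ∑ k ∈ (Finset.univ.erase istar).erase j, X k * q k := by
      intro q
      apply Finset.sum_congr rfl
      intro k hk
      obtain ⟨hk1, hk2⟩ := Finset.mem_erase.mp hk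
      rw [hYk k (Finset.mem_erase.mp hk2).1 hk1]
    refine ⟨Y, ?_, ?_, by rw [hYi]; exact hw1 j⟩
    · have hYw : ∑ k, Y k * w k = ∑ k, X k * w k := by
        rw [hdecomp Y w, hdecomp X w, hrest w, hYi, hYj, hXi0]
        have hmul : (X j - w istar) * w j = X j * w j - w istar * w j := Nat.sub_mul _ _ _
        have hle : w istar * w j ≤ X j * w j := Nat.mul_le_mul_right _ hwi
        have hcomm : w j * w istar = w istar * w j := Nat.mul_comm _ _
        omega
      rw [hYw]; exact hXfeas
    · intro y hy
      have h1 := hXopt y hy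
      have h2 : ∑ k, X k * p k ≤ ∑ k, Y k * p k := by
        rw [hdecomp Y p, hdecomp X p, hrest p, hYi, hYj, hXi0]
        have hmul : (X j - w istar) * p j = X j * p j - w istar * p j := Nat.sub_mul _ _ _
        have hle : w istar * p j ≤ X j * p j := Nat.mul_le_mul_right _ hwi
        have hstarj : p j * w istar ≤ p istar * w j := hstar j
        have hc1 : w istar * p j = p j * w istar := Nat.mul_comm _ _
        have hc2 : w j * p istar = p istar * w j := Nat.mul_comm _ _
        omega
      omega
end

section
/- Let 𝒫_ℐ[j] denote the maximum profit of any multiset of items from ℐ with total weight at most j. Suppose all items in ℐ have profit at most T, and let i* maximize p_i/w_i among them, with r = ⌈T/p_{i*}⌉. Then for the item set ℐ' = {(r·p_{i*}, r·w_{i*})} (a single item), for every w, 𝒫_{ℐ'}[w] ≥ 𝒫_ℐ[w] − T − p_{i*}. -/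
/-- Removing cheap items: if all items have profit at most `T`, `i*` has the best
profit-to-weight ratio, and `r = ⌈T / p_{i*}⌉`, then replacing the whole item set
by the single item `(r·p_{i*}, r·w_{i*})` loses at most `T + p_{i*}` profit at
every capacity `v`. -/
theorem remove_cheap_items (n : ℕ) (p w : Fin n → ℕ) (T : ℕ)
    (hp1 : ∀ k, 1 ≤ p k) (hw1 : ∀ k, 1 ≤ w k) (hpT : ∀ k, p k ≤ T)
    (istar : Fin n) (hstar : ∀ k, p k * w istar ≤ p istar * w k)
    (r : ℕ) (hr : r = (T + p istar - 1) / p istar)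
    (v : ℕ) :
    sSup {q | ∃ x : Fin n → ℕ, ∑ k, x k * w k ≤ v ∧ q = ∑ k, x k * p k}
      ≤ sSup {q | ∃ m : ℕ, m * (r * w istar) ≤ v ∧ q = m * (r * p istar)}
        + T + p istar := by
  have hps : 1 ≤ p istar := hp1 istar
  have hws : 1 ≤ w istar := hw1 istar
  have hT : 1 ≤ T := le_trans hps (hpT istar)
  have hrps : r * p istar ≤ T + p istar - 1 := by
    rw [hr]; exact Nat.div_mul_le_self _ _
  have hr1 : 1 ≤ r := by
    rw [hr]
    rw [Nat.one_le_div_iff (by omega)]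
    omega
  have hrws : 1 ≤ r * w istar := Nat.one_le_iff_ne_zero.mpr (by positivity)
  have hbdd : BddAbove {q | ∃ m : ℕ, m * (r * w istar) ≤ v ∧ q = m * (r * p istar)} := by
    refine ⟨v * (r * p istar), ?_⟩
    rintro q ⟨m, hm, rfl⟩
    have hmv : m ≤ v := le_trans (Nat.le_mul_of_pos_right m hrws) hm
    exact Nat.mul_le_mul_right _ hmv
  have hne : {q | ∃ x : Fin n → ℕ, ∑ k, x k * w k ≤ v ∧ q = ∑ k, x k * p k}.Nonempty :=
    ⟨0, 0, by simp, by simp⟩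
  apply csSup_le hne
  rintro q ⟨x, hxw, rfl⟩
  set W := ∑ k, x k * w k with hW
  set m := W / (r * w istar) with hm
  have hmW : m * (r * w istar) ≤ W := Nat.div_mul_le_self _ _
  have hWm : W ≤ m * (r * w istar) + r * w istar := by
    have h1 := Nat.div_add_mod W (r * w istar)
    have h2 := Nat.mod_lt W (show 0 < r * w istar by omega)
    rw [Nat.mul_comm] at h1
    rw [hm]; omega
  have key : (∑ k, x k * p k) * w istar ≤ p istar * W := by
    rw [hW, Finset.sum_mul, Finset.mul_sum]
    apply Finset.sum_le_sum
    intro k _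
    calc x k * p k * w istar = x k * (p k * w istar) := by ring
      _ ≤ x k * (p istar * w k) := Nat.mul_le_mul_left _ (hstar k)
      _ = p istar * (x k * w k) := by ring
  have hP : (∑ k, x k * p k) ≤ m * (r * p istar) + T + p istar := by
    have h2 : p istar * W ≤ (m * (r * p istar) + T + p istar) * w istar := by
      calc p istar * W ≤ p istar * (m * (r * w istar) + r * w istar) :=
            Nat.mul_le_mul_left _ hWm
        _ = (m * (r * p istar) + r * p istar) * w istar := by ring
        _ ≤ (m * (r * p istar) + T + p istar) * w istar := by
            apply Nat.mul_le_mul_right; omega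
    exact Nat.le_of_mul_le_mul_right (le_trans key h2) (by omega)
  have hmem : m * (r * p istar) ∈ {q | ∃ m : ℕ, m * (r * w istar) ≤ v ∧ q = m * (r * p istar)} :=
    ⟨m, le_trans hmW hxw, rfl⟩
  have := le_csSup hbdd hmem
  omega
end

section
/- Given a monotone non-decreasing sequence A[0..n] with entries in ℕ bounded by some value, set D = 5·A[n], W = 2n+1, and create for every i ∈ [0,n] a light item with profit A[i] and weight i, and a heavy item with profit D − A[i] and weight W − i. Then A is superadditive (A[i] + A[j] ≤ A[i+j] for all i+j ≤ n) if and only if the optimal Unbounded Knapsack value with capacity W over this item set is exactly D. -/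
/-!
If `A` is superadditive, a packing holds at most one heavy item, since two of them weigh more
than `W = 2n+1`. Light items packed beside the heavy item `k` weigh at most `k`, so by
superadditivity and monotonicity they are worth at most `A k`, and the total is at most `D`.
Without a heavy item, filling bins of capacity `n` greedily packs light items of total weight
`≤ 2n+1` into three bins, each worth at most `A n`, so the total is at most `3·A n ≤ D`; the
value `D` is attained by the light item `n` beside the heavy item `n`. Conversely, if
`A i + A j > A (i+j)`, the light items `i`, `j` beside the heavy item `i+j` are worth more than `D`.
-/

def SuperadditiveUpTo (A : ℕ → ℕ) (n : ℕ) : Prop :=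
  ∀ i j, i + j ≤ n → A i + A j ≤ A (i + j)

namespace SuperadditiveUpTo

variable {A : ℕ → ℕ} {n : ℕ}

theorem sum_map_le (hA : SuperadditiveUpTo A n) {m : Multiset ℕ} (hm : m.sum ≤ n) :
    (m.map A).sum ≤ A m.sum := by
  induction m using Multiset.induction with
  | empty => simp
  | cons a t ih =>
    rw [Multiset.sum_cons] at hm
    rw [Multiset.map_cons, Multiset.sum_cons, Multiset.sum_cons]
    calc A a + (t.map A).sum ≤ A a + A t.sum := Nat.add_le_add_left (ih (by omega)) _
      _ ≤ A (a + t.sum) := hA _ _ hm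

/-- `p` is the load of the current bin; once an item overflows it, the remaining items weigh at
most `n` in total and fill a third bin. -/
theorem add_sum_map_le_three_mul (hA : SuperadditiveUpTo A n) (hmono : MonotoneOn A (Set.Iic n))
    {m : Multiset ℕ} (hm : ∀ x ∈ m, x ≤ n) {p : ℕ} (hp : p ≤ n) (hsum : p + m.sum ≤ 2 * n + 1) :
    A p + (m.map A).sum ≤ 3 * A n := by
  have hAn : ∀ {x}, x ≤ n → A x ≤ A n := fun hx => hmono hx Set.self_mem_Iic hx
  induction m using Multiset.induction generalizing p with
  | empty => simpa using (hAn hp).trans (Nat.le_mul_of_pos_left _ three_pos)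
  | cons a t ih =>
    have ha : a ≤ n := hm a (Multiset.mem_cons_self a t)
    have ht : ∀ x ∈ t, x ≤ n := fun x hx => hm x (Multiset.mem_cons_of_mem hx)
    rw [Multiset.sum_cons] at hsum
    rw [Multiset.map_cons, Multiset.sum_cons]
    by_cases hpa : p + a ≤ n
    · have hmerge := hA p a hpa
      have := ih ht hpa (by omega)
      omega
    · have hrest : t.sum ≤ n := by omega
      have := (hA.sum_map_le hrest).trans (hAn hrest)
      have := hAn hp
      have := hAn ha
      omega

end SuperadditiveUpTo

def Multiset.ofCounts {ι α : Type*} [Fintype ι] (x : ι → ℕ) (e : ι → α) : Multiset α :=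
  ∑ i, Multiset.replicate (x i) (e i)

namespace Multiset

variable {ι α : Type*} [Fintype ι]

theorem sum_map_ofCounts (x : ι → ℕ) (e : ι → α) (f : α → ℕ) :
    ((ofCounts x e).map f).sum = ∑ i, x i * f (e i) := by
  rw [ofCounts, ← coe_mapAddMonoidHom, map_sum, sum_sum]
  simp [map_replicate, sum_replicate]

theorem sum_ofCounts (x : ι → ℕ) (e : ι → ℕ) : (ofCounts x e).sum = ∑ i, x i * e i := by
  simpa using sum_map_ofCounts x e id

theorem mem_ofCounts {x : ι → ℕ} {e : ι → α} {a : α} (ha : a ∈ ofCounts x e) : ∃ i, e i = a := by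
  obtain ⟨i, -, hi⟩ := mem_sum.mp ha
  exact ⟨i, (eq_of_mem_replicate hi).symm⟩

end Multiset

theorem Fintype.sum_single_one_mul {ι : Type*} [Fintype ι] [DecidableEq ι] (k : ι) (f : ι → ℕ) :
    ∑ i, (Pi.single k 1 : ι → ℕ) i * f i = f k := by
  simp [Pi.single_apply, ite_mul]

def knapsackValues (n W D : ℕ) (A : ℕ → ℕ) : Set ℕ :=
  {v | ∃ xL xH : Fin (n + 1) → ℕ,
    (∑ i, xL i * (i : ℕ)) + (∑ i, xH i * (W - (i : ℕ))) ≤ W ∧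
    v = (∑ i, xL i * A (i : ℕ)) + (∑ i, xH i * (D - A (i : ℕ)))}

section knapsackValues

variable {n W D : ℕ} {A : ℕ → ℕ}

theorem add_add_sub_mem_knapsackValues {i j k : ℕ} (hijk : i + j ≤ k) (hkn : k ≤ n)
    (hkW : k ≤ W) : A i + A j + (D - A k) ∈ knapsackValues n W D A := by
  refine ⟨Pi.single ⟨i, by omega⟩ 1 + Pi.single ⟨j, by omega⟩ 1, Pi.single ⟨k, by omega⟩ 1, ?_, ?_⟩ <;>
    simp only [Pi.add_apply, add_mul, Finset.sum_add_distrib, Fintype.sum_single_one_mul]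
  omega

theorem SuperadditiveUpTo.sum_map_add_sum_map_sub_le (hA : SuperadditiveUpTo A n)
    (hmono : MonotoneOn A (Set.Iic n)) (hD : 3 * A n ≤ D) {mL mH : Multiset ℕ}
    (hmL : ∀ x ∈ mL, x ≤ n) (hmH : ∀ x ∈ mH, x ≤ n)
    (hw : mL.sum + (mH.map (2 * n + 1 - ·)).sum ≤ 2 * n + 1) :
    (mL.map A).sum + (mH.map (D - A ·)).sum ≤ D := by
  have hcard : Multiset.card mH * (n + 1) ≤ 2 * n + 1 := by
    have := Multiset.card_nsmul_le_sum (s := mH.map (2 * n + 1 - ·)) (a := n + 1)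
      (by simp only [Multiset.mem_map]; rintro _ ⟨x, hx, rfl⟩; have := hmH x hx; omega)
    simp only [Multiset.card_map, smul_eq_mul] at this
    omega
  obtain h0 | h1 : Multiset.card mH = 0 ∨ Multiset.card mH = 1 := by
    rcases Nat.lt_or_ge (Multiset.card mH) 2 with h | h
    · omega
    · nlinarith
  · rw [Multiset.card_eq_zero.mp h0] at hw ⊢
    simp only [Multiset.map_zero, Multiset.sum_zero, add_zero] at hw ⊢
    have := hA.add_sum_map_le_three_mul hmono hmL (Nat.zero_le n) (by omega)
    omega
  · obtain ⟨k, rfl⟩ := Multiset.card_eq_one.mp h1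
    have hkn : k ≤ n := hmH k (Multiset.mem_singleton_self k)
    simp only [Multiset.map_singleton, Multiset.sum_singleton] at hw ⊢
    have hmLk : mL.sum ≤ k := by omega
    have := (hA.sum_map_le (hmLk.trans hkn)).trans (hmono (hmLk.trans hkn) hkn hmLk)
    have := hmono hkn Set.self_mem_Iic hkn
    omega

theorem le_of_mem_knapsackValues (hA : SuperadditiveUpTo A n) (hmono : MonotoneOn A (Set.Iic n))
    (hD : 3 * A n ≤ D) {v : ℕ} (hv : v ∈ knapsackValues n (2 * n + 1) D A) : v ≤ D := by
  obtain ⟨xL, xH, hw, rfl⟩ := hv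
  have hle : ∀ x : Fin (n + 1) → ℕ, ∀ a ∈ Multiset.ofCounts x Fin.val, a ≤ n := fun x a ha => by
    obtain ⟨i, rfl⟩ := Multiset.mem_ofCounts ha
    exact i.is_le
  rw [← Multiset.sum_ofCounts, ← Multiset.sum_map_ofCounts xH Fin.val (2 * n + 1 - ·)] at hw
  rw [← Multiset.sum_map_ofCounts xL Fin.val A, ← Multiset.sum_map_ofCounts xH Fin.val (D - A ·)]
  exact hA.sum_map_add_sum_map_sub_le hmono hD (hle xL) (hle xH) hw

end knapsackValues

theorem superadditivity_iff_knapsack_general (n : ℕ) (A : ℕ → ℕ)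
    (hmono : ∀ i j, i ≤ j → j ≤ n → A i ≤ A j)
    (D W : ℕ) (hD : D = 5 * A n) (hW : W = 2 * n + 1) :
    (∀ i j, i + j ≤ n → A i + A j ≤ A (i + j)) ↔
    sSup {v | ∃ xL xH : Fin (n + 1) → ℕ,
        (∑ i, xL i * (i : ℕ)) + (∑ i, xH i * (W - (i : ℕ))) ≤ W ∧
        v = (∑ i, xL i * A (i : ℕ)) + (∑ i, xH i * (D - A (i : ℕ)))} = D := by
  change SuperadditiveUpTo A n ↔ sSup (knapsackValues n W D A) = D
  subst hW
  have hmono' : MonotoneOn A (Set.Iic n) := fun i _ j hj hij => hmono i j hij hj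
  constructor
  · intro hA
    have hD_mem : D ∈ knapsackValues n (2 * n + 1) D A := by
      have hA0 : A 0 = 0 := by simpa using hA 0 0 (Nat.zero_le n)
      simpa [hA0, show A n ≤ D by omega] using
        add_add_sub_mem_knapsackValues (A := A) (D := D) (le_of_eq (add_zero n)) le_rfl (by omega)
    exact IsGreatest.csSup_eq ⟨hD_mem, fun v => le_of_mem_knapsackValues hA hmono' (by omega)⟩
  · intro hsup i j hij
    by_contra! hlt
    have hv := add_add_sub_mem_knapsackValues (A := A) (D := D) le_rfl hij (by omega : i + j ≤ 2 * n + 1)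
    have := hmono (i + j) n hij le_rfl
    by_cases hbdd : BddAbove (knapsackValues n (2 * n + 1) D A)
    · have := hsup ▸ le_csSup hbdd hv
      omega
    · -- in `ℕ`, `sSup` of an unbounded set is `0`
      rw [Nat.sSup_of_not_bddAbove hbdd] at hsup
      have := hmono i n (by omega) le_rfl
      have := hmono j n (by omega) le_rfl
      omega

/-- Reduction from SuperAdditivity to Unbounded Knapsack: with `D = 5·A[n]`,
`W = 2n+1`, light items `(A[i], i)` and heavy items `(D − A[i], W − i)` for
`i ∈ [0, n]`, the sequence `A` is superadditive iff the optimal Unbounded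
Knapsack value with capacity `W` is exactly `D`. -/
theorem superadditivity_iff_knapsack (n : ℕ) (A : ℕ → ℕ)
    (hA0 : A 0 = 0)
    (hmono : ∀ i j, i ≤ j → j ≤ n → A i ≤ A j)
    (D W : ℕ) (hD : D = 5 * A n) (hW : W = 2 * n + 1) :
    (∀ i j, i + j ≤ n → A i + A j ≤ A (i + j)) ↔
    sSup {v | ∃ xL xH : Fin (n + 1) → ℕ,
        (∑ i, xL i * (i : ℕ)) + (∑ i, xH i * (W - (i : ℕ))) ≤ W ∧
        v = (∑ i, xL i * A (i : ℕ)) + (∑ i, xH i * (D - A (i : ℕ)))} = D :=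
  superadditivity_iff_knapsack_general n A hmono D W hD hW
end

section
/- In a superadditive monotone sequence Knapsack instance (as in the SuperAdditivity → Unbounded Knapsack reduction with D = 5·A[n], W = 2n+1), any feasible solution consisting only of light items (weight i, profit A[i] for i ∈ [0,n]) has total profit at most 4·A[n] < D, assuming A is superadditive and A[n] ≥ 1. -/
/-- In the SuperAdditivity → Unbounded Knapsack reduction, any feasible solution
consisting only of light items (weight `i`, profit `A[i]`) with total weight at
most `2n+1` has total profit at most `4·A[n] < D = 5·A[n]`, when `A` is
superadditive, monotone and `A[n] ≥ 1`. -/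
theorem light_only_profit_bound (n : ℕ) (A : ℕ → ℕ)
    (hmono : ∀ i j, i ≤ j → j ≤ n → A i ≤ A j)
    (hsuper : ∀ i j, i + j ≤ n → A i + A j ≤ A (i + j))
    (hAn : 1 ≤ A n)
    (x : Fin (n + 1) → ℕ) (hx : ∑ i, x i * (i : ℕ) ≤ 2 * n + 1) :
    ∑ i, x i * A (i : ℕ) ≤ 4 * A n ∧ 4 * A n < 5 * A n := by
  have hA0 : A 0 = 0 := by have := hsuper 0 0 (by omega); simp at this; omega
  refine ⟨?_, by omega⟩
  rcases Nat.eq_zero_or_pos n with hn | hn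
  · subst hn
    have : ∑ i : Fin 1, x i * A (i : ℕ) = x 0 * A 0 := by simp
    rw [this, hA0]; simp
  -- repeated superadditivity
  have hmul : ∀ k i, k * i ≤ n → k * A i ≤ A (k * i) := by
    intro k
    induction k with
    | zero => intro i _; simp [hA0]
    | succ k ih =>
      intro i h
      have h1 : k * i ≤ n := le_trans (by nlinarith) h
      have h2 := ih i h1
      have h3 := hsuper (k * i) i (by nlinarith)
      have : (k + 1) * A i = k * A i + A i := by ring
      rw [this]
      calc k * A i + A i ≤ A (k * i) + A i := by omega
        _ ≤ A (k * i + i) := h3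
        _ = A ((k + 1) * i) := by ring_nf
  -- key pointwise bound
  have key : ∀ i, 1 ≤ i → i ≤ n → n * A i + A n ≤ 2 * i * A n := by
    intro i h1 h2
    obtain ⟨j, rfl⟩ : ∃ j, i = j + 1 := ⟨i - 1, by omega⟩
    set k := n / (j + 1) with hk
    have hk1 : 1 ≤ k := (Nat.one_le_div_iff (by omega)).mpr h2
    have hki : k * (j + 1) ≤ n := Nat.div_mul_le_self n (j + 1)
    have hkA : k * A (j + 1) ≤ A n := le_trans (hmul k (j + 1) hki) (hmono _ n hki le_rfl)
    have hdm : (j + 1) * k + n % (j + 1) = n := Nat.div_add_mod n (j + 1)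
    have hmlt : n % (j + 1) < j + 1 := Nat.mod_lt n (by omega)
    have hub : n < k * (j + 1) + (j + 1) := by nlinarith
    have hnk : n ≤ (2 * j + 1) * k := by nlinarith [Nat.mul_le_mul_left j hk1]
    have h5 : n * A (j + 1) ≤ (2 * j + 1) * A n := by
      calc n * A (j + 1) ≤ ((2 * j + 1) * k) * A (j + 1) := Nat.mul_le_mul_right _ hnk
        _ = (2 * j + 1) * (k * A (j + 1)) := by ring
        _ ≤ (2 * j + 1) * A n := Nat.mul_le_mul_left _ hkA
    nlinarith [h5]
  -- pointwise bound over Fin (n+1)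
  have point : ∀ i : Fin (n + 1),
      n * (x i * A (i : ℕ)) + (if (i : ℕ) = 0 then 0 else x i) * A n
        ≤ 2 * (x i * (i : ℕ)) * A n := by
    intro i
    by_cases h0 : (i : ℕ) = 0
    · simp [h0, hA0]
    · have h1 : 1 ≤ (i : ℕ) := Nat.one_le_iff_ne_zero.mpr h0
      have h2 : (i : ℕ) ≤ n := by omega
      have := key (i : ℕ) h1 h2
      simp only [if_neg h0]
      calc n * (x i * A (i : ℕ)) + x i * A n
          = x i * (n * A (i : ℕ) + A n) := by ring
        _ ≤ x i * (2 * (i : ℕ) * A n) := Nat.mul_le_mul_left _ this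
        _ = 2 * (x i * (i : ℕ)) * A n := by ring
  set P := ∑ i, x i * A (i : ℕ) with hP
  set W := ∑ i, x i * (i : ℕ) with hW
  set m := ∑ i : Fin (n + 1), (if (i : ℕ) = 0 then 0 else x i) with hm
  have hsum : n * P + m * A n ≤ 2 * W * A n := by
    have h := Finset.sum_le_sum (s := (Finset.univ : Finset (Fin (n + 1)))) (fun i _ => point i)
    simpa [hP, hW, hm, Finset.mul_sum, Finset.sum_mul, Finset.sum_add_distrib] using h
  rcases le_or_gt 2 m with hm2 | hm2
  · -- n * P ≤ 2 W A n - m A n ≤ (4n+2-2) A n = 4n A n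
    have h8 : 2 * W * A n ≤ (4 * n + 2) * A n := by
      have : 2 * W ≤ 4 * n + 2 := by omega
      exact Nat.mul_le_mul_right _ this
    have h9 : n * P ≤ 4 * n * A n := by nlinarith
    have h10 : n * P ≤ n * (4 * A n) := by
      calc n * P ≤ 4 * n * A n := h9
        _ = n * (4 * A n) := by ring
    exact Nat.le_of_mul_le_mul_left h10 hn
  · -- m ≤ 1 : P ≤ m * A n ≤ A n
    have hPm : P ≤ m * A n := by
      rw [hP, hm, Finset.sum_mul]
      refine Finset.sum_le_sum fun i _ => ?_
      by_cases h0 : (i : ℕ) = 0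
      · simp [h0, hA0]
      · simp only [if_neg h0]
        exact Nat.mul_le_mul_left _ (hmono _ n (by omega) le_rfl)
    have : m * A n ≤ 1 * A n := Nat.mul_le_mul_right _ (by omega)
    omega
end

section
/- Let A[0..n] and B[0..n] be monotone non-increasing sequences, and define A'[i] = A[n−i] + i and B'[i] = B[n−i] + i. Then A' and B' are monotone (strictly) increasing, and for all k ∈ [0, 2n], (A' ⊞ B')[k] = (A ⊞ B)[2n − k] + k, where ⊞ denotes (min,+)-convolution. -/
/-- The (min,+)-convolution of sequences `A[0..n]`, `B[0..n]` at index `k`. -/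
noncomputable def minConvZ (n : ℕ) (A B : ℕ → ℤ) (k : ℕ) : ℤ :=
  sInf {v : ℤ | ∃ i, i ≤ n ∧ i ≤ k ∧ k - i ≤ n ∧ v = A i + B (k - i)}

lemma minConvZ_bddBelow (n : ℕ) (A B : ℕ → ℤ) (k : ℕ) :
    BddBelow {v : ℤ | ∃ i, i ≤ n ∧ i ≤ k ∧ k - i ≤ n ∧ v = A i + B (k - i)} := by
  have hsub : {v : ℤ | ∃ i, i ≤ n ∧ i ≤ k ∧ k - i ≤ n ∧ v = A i + B (k - i)} ⊆
      (fun i => A i + B (k - i)) '' (Set.Iic n) := by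
    rintro v ⟨i, hi, _, _, rfl⟩
    exact ⟨i, hi, rfl⟩
  exact (((Set.finite_Iic n).image _).subset hsub).bddBelow

lemma minConvZ_nonempty (n : ℕ) (A B : ℕ → ℤ) (k : ℕ) (hk : k ≤ 2 * n) :
    {v : ℤ | ∃ i, i ≤ n ∧ i ≤ k ∧ k - i ≤ n ∧ v = A i + B (k - i)}.Nonempty :=
  ⟨A (min k n) + B (k - min k n), min k n, by omega, by omega, by omega, rfl⟩

/-- Reversing a monotone non-increasing sequence and adding the identity
function makes it strictly increasing, and the (min,+)-convolution transforms as
`(A' ⊞ B')[k] = (A ⊞ B)[2n − k] + k`. -/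
theorem minconv_reverse_shift (n : ℕ) (A B : ℕ → ℤ)
    (hA : ∀ i j, i ≤ j → j ≤ n → A j ≤ A i)
    (hB : ∀ i j, i ≤ j → j ≤ n → B j ≤ B i)
    (A' B' : ℕ → ℤ)
    (hA' : ∀ i ≤ n, A' i = A (n - i) + (i : ℤ))
    (hB' : ∀ i ≤ n, B' i = B (n - i) + (i : ℤ)) :
    (∀ i j, i < j → j ≤ n → A' i < A' j) ∧
    (∀ i j, i < j → j ≤ n → B' i < B' j) ∧
    ∀ k ≤ 2 * n, minConvZ n A' B' k = minConvZ n A B (2 * n - k) + (k : ℤ) := by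
  refine ⟨?_, ?_, ?_⟩
  · intro i j hij hj
    rw [hA' i (by omega), hA' j hj]
    have h1 : A (n - i) ≤ A (n - j) := hA (n - j) (n - i) (by omega) (by omega)
    have : (i : ℤ) < j := by exact_mod_cast hij
    linarith
  · intro i j hij hj
    rw [hB' i (by omega), hB' j hj]
    have h1 : B (n - i) ≤ B (n - j) := hB (n - j) (n - i) (by omega) (by omega)
    have : (i : ℤ) < j := by exact_mod_cast hij
    linarith
  · intro k hk
    set m := 2 * n - k with hm
    set S : Set ℤ := {v : ℤ | ∃ j, j ≤ n ∧ j ≤ m ∧ m - j ≤ n ∧ v = A j + B (m - j)} with hS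
    have hSne : S.Nonempty := minConvZ_nonempty n A B m (by omega)
    have hSbdd : BddBelow S := minConvZ_bddBelow n A B m
    have hset : {v : ℤ | ∃ i, i ≤ n ∧ i ≤ k ∧ k - i ≤ n ∧ v = A' i + B' (k - i)} =
        (fun w => w + (k : ℤ)) '' S := by
      ext v
      constructor
      · rintro ⟨i, hi, hik, hki, rfl⟩
        refine ⟨A (n - i) + B (m - (n - i)), ⟨n - i, by omega, by omega, by omega, rfl⟩, ?_⟩
        rw [hA' i hi, hB' (k - i) hki]
        have : m - (n - i) = n - (k - i) := by omega
        rw [this]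
        push_cast [Nat.cast_sub hik]
        ring
      · rintro ⟨w, ⟨j, hj, hjm, hmj, rfl⟩, rfl⟩
        refine ⟨n - j, by omega, by omega, by omega, ?_⟩
        rw [hA' (n - j) (by omega), hB' (k - (n - j)) (by omega)]
        have h1 : n - (n - j) = j := by omega
        have h2 : n - (k - (n - j)) = m - j := by omega
        rw [h1, h2]
        have h3 : ((n - j : ℕ) : ℤ) + ((k - (n - j) : ℕ) : ℤ) = (k : ℤ) := by
          have := Nat.cast_sub (show j ≤ n by omega) (R := ℤ)
          have := Nat.cast_sub (show n - j ≤ k by omega) (R := ℤ)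
          push_cast [Nat.cast_sub (show j ≤ n by omega),
            Nat.cast_sub (show n - j ≤ k by omega)]
          ring
        dsimp only
        linarith
    unfold minConvZ
    rw [hset, ← hS]
    have hglb : IsGLB ((fun w => w + (k : ℤ)) '' S) (sInf S + (k : ℤ)) := by
      constructor
      · rintro v ⟨w, hw, rfl⟩
        have := csInf_le hSbdd hw
        dsimp only
        linarith
      · intro b hb
        have : b - (k : ℤ) ≤ sInf S := by
          apply le_csInf hSne
          intro w hw
          have := hb ⟨w, hw, rfl⟩
          simp only at this
          linarith
        linarith
    exact hglb.csInf_eq (hSne.image _)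
end

section
/- Let A[0..n], B[0..n] be monotone non-decreasing step-represented sequences and fix thresholds p*, w* > 0 and ε ∈ (0, 1/8]. Round each step (w, p) of A with w ≤ w*, p ≤ p* to (⌈w/(εw*)⌉, ⌊p/(εp*)⌋), yielding A', and similarly B'; let C'' be the result of computing A' ⊕ B' and scaling each step (w', p') back to (w'·εw*, p'·εp*). Then: (a) for every step (w, p) of C = A ⊕ B with w*/2 ≤ w ≤ w* and p*/2 ≤ p ≤ p*, there is a step (w'', p'') of C'' with w'' ≤ (1+4ε)w and p'' ≥ p/(1+8ε); and (b) every step (w'', p'') of C'' is dominated by a true step: there is a step (w, p) of C with w ≤ w'' and p ≥ p''. -/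
set_option maxHeartbeats 1000000

/-- The (max,+)-convolution of `A[0..n]`, `B[0..n]` at index `k` (over ℕ). -/
noncomputable def maxConvN (n : ℕ) (A B : ℕ → ℕ) (k : ℕ) : ℕ :=
  sSup {v : ℕ | ∃ i, i ≤ n ∧ i ≤ k ∧ k - i ≤ n ∧ v = A i + B (k - i)}

/-- The steps of a monotone non-decreasing sequence `f[0..n]`: pairs
`(w, f w)` with `w = 0` or `f (w-1) < f w`. -/
def stepSet (f : ℕ → ℕ) (n : ℕ) : Set (ℕ × ℕ) :=
  {s | s.1 ≤ n ∧ (s.1 = 0 ∨ f (s.1 - 1) < f s.1) ∧ s.2 = f s.1}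

lemma convSet_bdd (n : ℕ) (A B : ℕ → ℕ)
    (hA : ∀ i j, i ≤ j → j ≤ n → A i ≤ A j)
    (hB : ∀ i j, i ≤ j → j ≤ n → B i ≤ B j) (k : ℕ) :
    BddAbove {v : ℕ | ∃ i, i ≤ n ∧ i ≤ k ∧ k - i ≤ n ∧ v = A i + B (k - i)} := by
  refine ⟨A n + B n, ?_⟩
  rintro v ⟨i, h1, h2, h3, rfl⟩
  exact add_le_add (hA i n h1 le_rfl) (hB _ n h3 le_rfl)

lemma maxConv_spec (n : ℕ) (A B : ℕ → ℕ)
    (hA : ∀ i j, i ≤ j → j ≤ n → A i ≤ A j)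
    (hB : ∀ i j, i ≤ j → j ≤ n → B i ≤ B j) (k : ℕ) (hk : k ≤ 2 * n) :
    ∃ i, i ≤ n ∧ i ≤ k ∧ k - i ≤ n ∧ maxConvN n A B k = A i + B (k - i) := by
  have hne : {v : ℕ | ∃ i, i ≤ n ∧ i ≤ k ∧ k - i ≤ n ∧ v = A i + B (k - i)}.Nonempty :=
    ⟨A (k - min k n) + B (k - (k - min k n)), k - min k n, by omega, by omega, by omega, rfl⟩
  exact Nat.sSup_mem hne (convSet_bdd n A B hA hB k)

lemma maxConv_ge (n : ℕ) (A B : ℕ → ℕ)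
    (hA : ∀ i j, i ≤ j → j ≤ n → A i ≤ A j)
    (hB : ∀ i j, i ≤ j → j ≤ n → B i ≤ B j) (k i : ℕ)
    (h1 : i ≤ n) (h2 : i ≤ k) (h3 : k - i ≤ n) :
    A i + B (k - i) ≤ maxConvN n A B k :=
  le_csSup (convSet_bdd n A B hA hB k) ⟨i, h1, h2, h3, rfl⟩

lemma maxConv_mono (n : ℕ) (A B : ℕ → ℕ)
    (hA : ∀ i j, i ≤ j → j ≤ n → A i ≤ A j)
    (hB : ∀ i j, i ≤ j → j ≤ n → B i ≤ B j) (k k' : ℕ)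
    (hkk : k ≤ k') (hk' : k' ≤ 2 * n) :
    maxConvN n A B k ≤ maxConvN n A B k' := by
  obtain ⟨i, h1, h2, h3, hval⟩ := maxConv_spec n A B hA hB k (hkk.trans hk')
  rw [hval]
  calc A i + B (k - i) ≤ A (max i (k' - n)) + B (k' - max i (k' - n)) :=
        add_le_add (hA i _ (le_max_left _ _) (by omega)) (hB _ _ (by omega) (by omega))
    _ ≤ maxConvN n A B k' := maxConv_ge n A B hA hB k' _ (by omega) (by omega) (by omega)

lemma least_step (f : ℕ → ℕ) (n : ℕ) (hf : ∀ a b, a ≤ b → b ≤ n → f a ≤ f b)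
    (i : ℕ) (hi : i ≤ n) :
    ∃ i', i' ≤ i ∧ (i', f i') ∈ stepSet f n ∧ f i' = f i := by
  classical
  have hex : ∃ m, f m = f i := ⟨i, rfl⟩
  have hle : Nat.find hex ≤ i := Nat.find_min' hex rfl
  have hval : f (Nat.find hex) = f i := Nat.find_spec hex
  refine ⟨Nat.find hex, hle, ⟨hle.trans hi, ?_, rfl⟩, hval⟩
  show Nat.find hex = 0 ∨ f (Nat.find hex - 1) < f (Nat.find hex)
  rcases Nat.eq_zero_or_pos (Nat.find hex) with h0 | h0
  · exact Or.inl h0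
  · right
    have hne : f (Nat.find hex - 1) ≠ f i := Nat.find_min hex (by omega)
    have hle2 : f (Nat.find hex - 1) ≤ f (Nat.find hex) := hf _ _ (by omega) (hle.trans hi)
    omega

/-- Rounding steps in the weak approximation of (max,+)-convolution: if the
steps of `A`, `B` with weight `≤ w*` and profit `≤ p*` are rounded to
`(⌈w/(εw*)⌉, ⌊p/(εp*)⌋)` giving step sets `SA'`, `SB'`, and `SC''` is obtained
from the convolution of the rounded sequences by scaling back, then
(a) every step `(w, p)` of `C = A ⊕ B` with `w*/2 ≤ w ≤ w*`, `p*/2 ≤ p ≤ p*`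
has a counterpart in `SC''` with weight `≤ (1+4ε)w` and profit `≥ p/(1+8ε)`;
(b) every element of `SC''` is dominated by a true step of `C`. -/
theorem step_rounding (n : ℕ) (A B : ℕ → ℕ)
    (hA : ∀ i j, i ≤ j → j ≤ n → A i ≤ A j)
    (hB : ∀ i j, i ≤ j → j ≤ n → B i ≤ B j)
    (wstar pstar : ℕ) (hws : 0 < wstar) (hps : 0 < pstar)
    (ε : ℝ) (hε0 : 0 < ε) (hε : ε ≤ 1 / 8)
    (C : ℕ → ℕ) (hC : ∀ k, C k = maxConvN n A B k)
    (SA' SB' : Set (ℕ × ℕ))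
    (hSA' : SA' = {s' | ∃ s ∈ stepSet A n, s.1 ≤ wstar ∧ s.2 ≤ pstar ∧
        s'.1 = ⌈(s.1 : ℝ) / (ε * wstar)⌉₊ ∧ s'.2 = ⌊(s.2 : ℝ) / (ε * pstar)⌋₊})
    (hSB' : SB' = {s' | ∃ s ∈ stepSet B n, s.1 ≤ wstar ∧ s.2 ≤ pstar ∧
        s'.1 = ⌈(s.1 : ℝ) / (ε * wstar)⌉₊ ∧ s'.2 = ⌊(s.2 : ℝ) / (ε * pstar)⌋₊})
    (SC'' : Set (ℝ × ℝ))
    (hcomplete : ∀ sa ∈ SA', ∀ sb ∈ SB', ∃ sc ∈ SC'',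
        sc.1 ≤ ((sa.1 + sb.1 : ℕ) : ℝ) * (ε * wstar) ∧
        ((sa.2 + sb.2 : ℕ) : ℝ) * (ε * pstar) ≤ sc.2)
    (hsound : ∀ sc ∈ SC'', ∃ sa ∈ SA', ∃ sb ∈ SB',
        sc.1 = ((sa.1 + sb.1 : ℕ) : ℝ) * (ε * wstar) ∧
        sc.2 = ((sa.2 + sb.2 : ℕ) : ℝ) * (ε * pstar)) :
    (∀ s ∈ stepSet C (2 * n),
        wstar ≤ 2 * s.1 → s.1 ≤ wstar → pstar ≤ 2 * s.2 → s.2 ≤ pstar →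
        ∃ sc ∈ SC'', sc.1 ≤ (1 + 4 * ε) * (s.1 : ℝ) ∧
          (s.2 : ℝ) / (1 + 8 * ε) ≤ sc.2) ∧
    (∀ sc ∈ SC'', ∃ s ∈ stepSet C (2 * n),
        (s.1 : ℝ) ≤ sc.1 ∧ sc.2 ≤ (s.2 : ℝ)) := by
  have hwR : (0:ℝ) < wstar := by exact_mod_cast hws
  have hpR : (0:ℝ) < pstar := by exact_mod_cast hps
  have hεw : (0:ℝ) < ε * wstar := by positivity
  have hεp : (0:ℝ) < ε * pstar := by positivity
  constructor
  · rintro ⟨w, p⟩ ⟨hwn, _, hp⟩ hw1 hw2 hp1 hp2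
    simp only at hwn hp hw1 hw2 hp1 hp2 ⊢
    obtain ⟨i0, hi0n, hi0w, hj0n, hval⟩ := maxConv_spec n A B hA hB w hwn
    obtain ⟨i, hii, hiStep, hiv⟩ := least_step A n hA i0 hi0n
    obtain ⟨j, hjj, hjStep, hjv⟩ := least_step B n hB (w - i0) hj0n
    have hpval : p = A i + B j := by rw [hp, hC, hval, hiv, hjv]
    have hiw : i ≤ wstar := le_trans (hii.trans hi0w) hw2
    have hjw : j ≤ wstar := le_trans (hjj.trans (Nat.sub_le _ _)) hw2
    have hip : A i ≤ pstar := by omega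
    have hjp : B j ≤ pstar := by omega
    have hsaMem : (⌈(i:ℝ)/(ε*wstar)⌉₊, ⌊((A i : ℕ):ℝ)/(ε*pstar)⌋₊) ∈ SA' := by
      rw [hSA']; exact ⟨(i, A i), hiStep, hiw, hip, rfl, rfl⟩
    have hsbMem : (⌈(j:ℝ)/(ε*wstar)⌉₊, ⌊((B j : ℕ):ℝ)/(ε*pstar)⌋₊) ∈ SB' := by
      rw [hSB']; exact ⟨(j, B j), hjStep, hjw, hjp, rfl, rfl⟩
    obtain ⟨sc, hscMem, hsc1, hsc2⟩ := hcomplete _ hsaMem _ hsbMem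
    refine ⟨sc, hscMem, ?_, ?_⟩
    · push_cast at hsc1
      have hca : (⌈(i:ℝ)/(ε*wstar)⌉₊ : ℝ) < (i:ℝ)/(ε*wstar) + 1 :=
        Nat.ceil_lt_add_one (by positivity)
      have hcb : (⌈(j:ℝ)/(ε*wstar)⌉₊ : ℝ) < (j:ℝ)/(ε*wstar) + 1 :=
        Nat.ceil_lt_add_one (by positivity)
      have e1 : (i:ℝ)/(ε*wstar) * (ε*wstar) = (i:ℝ) := div_mul_cancel₀ _ hεw.ne'
      have e2 : (j:ℝ)/(ε*wstar) * (ε*wstar) = (j:ℝ) := div_mul_cancel₀ _ hεw.ne'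
      have ha' : (⌈(i:ℝ)/(ε*wstar)⌉₊ : ℝ) * (ε*wstar) < (i:ℝ) + ε*wstar := by
        have h := mul_lt_mul_of_pos_right hca hεw
        rw [add_mul, e1, one_mul] at h; exact h
      have hb' : (⌈(j:ℝ)/(ε*wstar)⌉₊ : ℝ) * (ε*wstar) < (j:ℝ) + ε*wstar := by
        have h := mul_lt_mul_of_pos_right hcb hεw
        rw [add_mul, e2, one_mul] at h; exact h
      have hij : (i:ℝ) + (j:ℝ) ≤ (w:ℝ) := by
        have : i + j ≤ w := by omega
        exact_mod_cast this
      have hw2p : (wstar:ℝ) ≤ 2 * (w:ℝ) := by exact_mod_cast hw1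
      have hεW2 : ε * wstar ≤ ε * (2 * w) :=
        mul_le_mul_of_nonneg_left hw2p hε0.le
      rw [add_mul] at hsc1
      have hεw2' : ε * (2 * (w:ℝ)) = 2 * (ε * w) := by ring
      have hgoal : (1 + 4 * ε) * (w:ℝ) = w + 4 * (ε * w) := by ring
      rw [hgoal]
      rw [hεw2'] at hεW2
      linarith
    · push_cast at hsc2
      have hfa : ((A i : ℕ):ℝ)/(ε*pstar) < (⌊((A i : ℕ):ℝ)/(ε*pstar)⌋₊ : ℝ) + 1 :=
        Nat.lt_floor_add_one _
      have hfb : ((B j : ℕ):ℝ)/(ε*pstar) < (⌊((B j : ℕ):ℝ)/(ε*pstar)⌋₊ : ℝ) + 1 :=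
        Nat.lt_floor_add_one _
      have e1 : ((A i : ℕ):ℝ)/(ε*pstar) * (ε*pstar) = ((A i : ℕ):ℝ) :=
        div_mul_cancel₀ _ hεp.ne'
      have e2 : ((B j : ℕ):ℝ)/(ε*pstar) * (ε*pstar) = ((B j : ℕ):ℝ) :=
        div_mul_cancel₀ _ hεp.ne'
      have ha' : ((A i : ℕ):ℝ) - ε*pstar < (⌊((A i : ℕ):ℝ)/(ε*pstar)⌋₊ : ℝ) * (ε*pstar) := by
        have h := mul_lt_mul_of_pos_right hfa hεp
        rw [add_mul, one_mul, e1] at h; linarith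
      have hb' : ((B j : ℕ):ℝ) - ε*pstar < (⌊((B j : ℕ):ℝ)/(ε*pstar)⌋₊ : ℝ) * (ε*pstar) := by
        have h := mul_lt_mul_of_pos_right hfb hεp
        rw [add_mul, one_mul, e2] at h; linarith
      have hpsum : ((A i : ℕ):ℝ) + ((B j : ℕ):ℝ) = (p:ℝ) := by
        rw [hpval]; push_cast; ring
      have hp2p : (pstar:ℝ) ≤ 2 * (p:ℝ) := by exact_mod_cast hp1
      have hεP2 : ε * pstar ≤ ε * (2 * p) := mul_le_mul_of_nonneg_left hp2p hε0.le
      have hscge : (p:ℝ) - 2 * (ε * pstar) ≤ sc.2 := by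
        rw [add_mul] at hsc2; linarith
      have hppos : (0:ℝ) ≤ (p:ℝ) := Nat.cast_nonneg p
      rw [div_le_iff₀ (by linarith : (0:ℝ) < 1 + 8 * ε)]
      have hsclow : (p:ℝ) * (1 - 4 * ε) ≤ sc.2 := by nlinarith
      have hmul := mul_le_mul_of_nonneg_right hsclow
        (show (0:ℝ) ≤ 1 + 8 * ε by linarith)
      have hkey := mul_nonneg (mul_nonneg hppos hε0.le)
        (show (0:ℝ) ≤ 1 - 8 * ε by linarith)
      nlinarith [hmul, hkey]
  · rintro sc hsc
    obtain ⟨sa, hsa, sb, hsb, h1, h2⟩ := hsound sc hsc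
    rw [hSA'] at hsa
    rw [hSB'] at hsb
    obtain ⟨⟨i, pa⟩, ⟨hin, _, hpa⟩, hiw, hpaP, hsa1, hsa2⟩ := hsa
    obtain ⟨⟨j, pb⟩, ⟨hjn, _, hpb⟩, hjw, hpbP, hsb1, hsb2⟩ := hsb
    simp only at hin hpa hiw hpaP hsa1 hsa2 hjn hpb hjw hpbP hsb1 hsb2
    subst hpa hpb
    have hCmono : ∀ a b, a ≤ b → b ≤ 2 * n → C a ≤ C b := by
      intro a b hab hb
      rw [hC, hC]; exact maxConv_mono n A B hA hB a b hab hb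
    have hk2n : i + j ≤ 2 * n := by omega
    obtain ⟨w, hwk, hwStep, hwv⟩ := least_step C (2 * n) hCmono (i + j) hk2n
    refine ⟨(w, C w), hwStep, ?_, ?_⟩
    · simp only
      have hca : (i:ℝ) ≤ (⌈(i:ℝ)/(ε*wstar)⌉₊ : ℝ) * (ε*wstar) := by
        have h := Nat.le_ceil ((i:ℝ)/(ε*wstar))
        calc (i:ℝ) = (i:ℝ)/(ε*wstar) * (ε*wstar) := (div_mul_cancel₀ _ hεw.ne').symm
          _ ≤ _ := mul_le_mul_of_nonneg_right h hεw.le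
      have hcb : (j:ℝ) ≤ (⌈(j:ℝ)/(ε*wstar)⌉₊ : ℝ) * (ε*wstar) := by
        have h := Nat.le_ceil ((j:ℝ)/(ε*wstar))
        calc (j:ℝ) = (j:ℝ)/(ε*wstar) * (ε*wstar) := (div_mul_cancel₀ _ hεw.ne').symm
          _ ≤ _ := mul_le_mul_of_nonneg_right h hεw.le
      have hwle : (w:ℝ) ≤ (i:ℝ) + (j:ℝ) := by exact_mod_cast hwk
      rw [h1, hsa1, hsb1]
      push_cast
      rw [add_mul]
      linarith
    · simp only
      have hfa : (⌊((A i : ℕ):ℝ)/(ε*pstar)⌋₊ : ℝ) * (ε*pstar) ≤ ((A i : ℕ):ℝ) := by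
        have h := Nat.floor_le (by positivity : (0:ℝ) ≤ ((A i : ℕ):ℝ)/(ε*pstar))
        calc (⌊((A i : ℕ):ℝ)/(ε*pstar)⌋₊ : ℝ) * (ε*pstar)
            ≤ ((A i : ℕ):ℝ)/(ε*pstar) * (ε*pstar) := mul_le_mul_of_nonneg_right h hεp.le
          _ = _ := div_mul_cancel₀ _ hεp.ne'
      have hfb : (⌊((B j : ℕ):ℝ)/(ε*pstar)⌋₊ : ℝ) * (ε*pstar) ≤ ((B j : ℕ):ℝ) := by
        have h := Nat.floor_le (by positivity : (0:ℝ) ≤ ((B j : ℕ):ℝ)/(ε*pstar))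
        calc (⌊((B j : ℕ):ℝ)/(ε*pstar)⌋₊ : ℝ) * (ε*pstar)
            ≤ ((B j : ℕ):ℝ)/(ε*pstar) * (ε*pstar) := mul_le_mul_of_nonneg_right h hεp.le
          _ = _ := div_mul_cancel₀ _ hεp.ne'
      have hCk : A i + B j ≤ C (i + j) := by
        rw [hC]
        have := maxConv_ge n A B hA hB (i + j) i hin (by omega) (by omega)
        simpa using this
      have hCw : ((A i : ℕ):ℝ) + ((B j : ℕ):ℝ) ≤ (C w : ℝ) := by
        rw [hwv]
        exact_mod_cast hCk
      rw [h2, hsa2, hsb2]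
      push_cast
      rw [add_mul]
      linarith
end

section
/- Let x be an optimal solution for 𝒫_i[j] (so p(x) = 𝒫_i[j], w(x) ≤ j, ‖x‖₁ ≤ 2^i), and suppose x = x₁ + x₂ with w(x₁) = j₁, w(x₂) ≤ j₂, j₁ + j₂ = j, and ‖x₁‖₁, ‖x₂‖₁ ≤ 2^{i−1}. Then p(x₁) = 𝒫_{i-1}[j₁] and p(x₂) = 𝒫_{i-1}[j₂]. -/
lemma knap_bdd (n : ℕ) (w p : Fin n → ℕ) (i j : ℕ) :
    BddAbove {v | ∃ x : Fin n → ℕ,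
        ∑ k, x k * w k ≤ j ∧ ∑ k, x k ≤ 2 ^ i ∧ v = ∑ k, x k * p k} := by
  refine ⟨2 ^ i * (Finset.univ.sup p), ?_⟩
  rintro v ⟨x, _, hc, rfl⟩
  calc ∑ k, x k * p k ≤ ∑ k, x k * (Finset.univ.sup p) := by
        apply Finset.sum_le_sum
        intro k _
        exact Nat.mul_le_mul_left _ (Finset.le_sup (Finset.mem_univ k))
    _ = (∑ k, x k) * (Finset.univ.sup p) := by rw [Finset.sum_mul]
    _ ≤ 2 ^ i * (Finset.univ.sup p) := Nat.mul_le_mul_right _ hc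

lemma knap_nonempty (n : ℕ) (w p : Fin n → ℕ) (i j : ℕ) :
    {v | ∃ x : Fin n → ℕ,
        ∑ k, x k * w k ≤ j ∧ ∑ k, x k ≤ 2 ^ i ∧ v = ∑ k, x k * p k}.Nonempty :=
  ⟨0, 0, by simp, by simp, by simp⟩

/-- In an optimal split of an optimal solution, each part is itself optimal:
if `x` attains `P i j` and `x = x₁ + x₂` with `w(x₁) = j₁`, `w(x₂) ≤ j₂`,
`j₁ + j₂ = j`, and each part has at most `2^(i-1)` items, then
`p(x₁) = P (i-1) j₁` and `p(x₂) = P (i-1) j₂`. -/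
theorem optimal_split_parts_optimal (n : ℕ) (w p : Fin n → ℕ)
    (hw1 : ∀ k, 1 ≤ w k)
    (P : ℕ → ℕ → ℕ)
    (hP : ∀ i j, P i j =
      sSup {v | ∃ x : Fin n → ℕ,
        ∑ k, x k * w k ≤ j ∧ ∑ k, x k ≤ 2 ^ i ∧ v = ∑ k, x k * p k})
    (i : ℕ) (hi : 1 ≤ i) (j j₁ j₂ : ℕ) (hj : j₁ + j₂ = j)
    (x x₁ x₂ : Fin n → ℕ) (hsplit : x = x₁ + x₂)
    (hopt : ∑ k, x k * p k = P i j)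
    (hwx : ∑ k, x k * w k ≤ j) (hcard : ∑ k, x k ≤ 2 ^ i)
    (hw1' : ∑ k, x₁ k * w k = j₁) (hw2 : ∑ k, x₂ k * w k ≤ j₂)
    (hc1 : ∑ k, x₁ k ≤ 2 ^ (i - 1)) (hc2 : ∑ k, x₂ k ≤ 2 ^ (i - 1)) :
    ∑ k, x₁ k * p k = P (i - 1) j₁ ∧ ∑ k, x₂ k * p k = P (i - 1) j₂ := by
  have hpow : 2 ^ (i - 1) + 2 ^ (i - 1) = 2 ^ i := by
    rw [← two_mul, ← pow_succ']
    congr 1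
    omega
  have hpsplit : ∑ k, x k * p k = (∑ k, x₁ k * p k) + (∑ k, x₂ k * p k) := by
    rw [← Finset.sum_add_distrib]
    apply Finset.sum_congr rfl
    intro k _
    rw [hsplit]
    simp [add_mul]
  -- upper bounds: each part's profit ≤ P (i-1) jₘ
  have hle1 : ∑ k, x₁ k * p k ≤ P (i-1) j₁ := by
    rw [hP]
    exact le_csSup (knap_bdd n w p (i-1) j₁) ⟨x₁, le_of_eq hw1', hc1, rfl⟩
  have hle2 : ∑ k, x₂ k * p k ≤ P (i-1) j₂ := by
    rw [hP]
    exact le_csSup (knap_bdd n w p (i-1) j₂) ⟨x₂, hw2, hc2, rfl⟩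
  -- optimal attainers for P (i-1) j₁ and P (i-1) j₂
  have hmem1 : P (i-1) j₁ ∈ {v | ∃ y : Fin n → ℕ,
      ∑ k, y k * w k ≤ j₁ ∧ ∑ k, y k ≤ 2 ^ (i-1) ∧ v = ∑ k, y k * p k} := by
    rw [hP]
    exact Nat.sSup_mem (knap_nonempty n w p (i-1) j₁) (knap_bdd n w p (i-1) j₁)
  have hmem2 : P (i-1) j₂ ∈ {v | ∃ y : Fin n → ℕ,
      ∑ k, y k * w k ≤ j₂ ∧ ∑ k, y k ≤ 2 ^ (i-1) ∧ v = ∑ k, y k * p k} := by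
    rw [hP]
    exact Nat.sSup_mem (knap_nonempty n w p (i-1) j₂) (knap_bdd n w p (i-1) j₂)
  obtain ⟨y₁, hy1w, hy1c, hy1p⟩ := hmem1
  obtain ⟨y₂, hy2w, hy2c, hy2p⟩ := hmem2
  -- combining y₁ with x₂ gives a feasible solution for P i j
  have key1 : P (i-1) j₁ + ∑ k, x₂ k * p k ≤ P i j := by
    rw [hy1p, hP i j]
    apply le_csSup (knap_bdd n w p i j)
    refine ⟨y₁ + x₂, ?_, ?_, ?_⟩
    · calc ∑ k, (y₁ + x₂) k * w k = (∑ k, y₁ k * w k) + ∑ k, x₂ k * w k := by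
            rw [← Finset.sum_add_distrib]; apply Finset.sum_congr rfl
            intro k _; simp [add_mul]
      _ ≤ j₁ + j₂ := Nat.add_le_add hy1w hw2
      _ = j := hj
    · calc ∑ k, (y₁ + x₂) k = (∑ k, y₁ k) + ∑ k, x₂ k := by
            rw [← Finset.sum_add_distrib]; simp
      _ ≤ 2 ^ (i-1) + 2 ^ (i-1) := Nat.add_le_add hy1c hc2
      _ = 2 ^ i := hpow
    · rw [← Finset.sum_add_distrib]
      apply Finset.sum_congr rfl
      intro k _; simp [add_mul]
  have key2 : (∑ k, x₁ k * p k) + P (i-1) j₂ ≤ P i j := by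
    rw [hy2p, hP i j]
    apply le_csSup (knap_bdd n w p i j)
    refine ⟨x₁ + y₂, ?_, ?_, ?_⟩
    · calc ∑ k, (x₁ + y₂) k * w k = (∑ k, x₁ k * w k) + ∑ k, y₂ k * w k := by
            rw [← Finset.sum_add_distrib]; apply Finset.sum_congr rfl
            intro k _; simp [add_mul]
      _ ≤ j₁ + j₂ := Nat.add_le_add (le_of_eq hw1') hy2w
      _ = j := hj
    · calc ∑ k, (x₁ + y₂) k = (∑ k, x₁ k) + ∑ k, y₂ k := by
            rw [← Finset.sum_add_distrib]; simp
      _ ≤ 2 ^ (i-1) + 2 ^ (i-1) := Nat.add_le_add hc1 hy2c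
      _ = 2 ^ i := hpow
    · rw [← Finset.sum_add_distrib]
      apply Finset.sum_congr rfl
      intro k _; simp [add_mul]
  omega
end
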